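/- arXiv:math-ph/0608056 — 7 statements merged into one kernel-verified Lean document; each statement's English description precedes it below -/
import Mathlib

section
/- Let t > 0 and let n1, n2 ≥ 1 be integers. Let z1, z2 be integers with z1 < n1 and z2 < n2. Then the sum ∑_{k=0}^{n2−1} ψ_{n1−n2+k}(z1) · φ_k(z2) equals (−1/(2πi)) ∮_{|v|=ρ} dv (1+v)^{z2+n1−n2} (−v)^{−(z1−n1+n2+1)} e^{−t(1+2v)}, where the contour is a positively oriented circle of radius ρ ∈ (0,1) centered at the origin. (This is the main term of the extended kernel for the TASEP with alternating initial configuration, Theorem 2.2.) -/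
/-!
Substituting `w = -u` turns `ψ_{n₁-n₂+k}(z₁)` into a contour integral of
`u^(-z₁-1) e^(-ut) (u(1+u))^(n₁-n₂+k)`. After moving the contours to radii `|u| = 1/4` and
`|v| = 1/2`, the sum over `k` becomes a double contour integral of a finite geometric series in
`u(1+u) / (v(1+v))`. Since `v(1+v) - u(1+u) = (v-u)(u+v+1)`, the summed integrand is
`g(u,v)/(v-u) - J(u,v)` (`polarPart` and `regularPart` below): the pole at `v = u` contributes
`2πi g(u,u)`, which is the integrand of the right-hand side, while `J` is holomorphic in `u` on
`|u| ≤ 1/4` because `z₁ < n₁`, so its double integral vanishes by Fubini and Cauchy's theorem.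
-/

open Complex Metric Set MeasureTheory
open scoped Real

/-- `ψ_k(z) = ((-1)^k/(2πi)) ∮_{|w|=r} dw w^(-z-1) e^((w-1)t) ((w-1)w)^k`, with the
contour a positively oriented circle of radius `r ∈ (0,1)` centered at the origin. -/
noncomputable def psi (t r : ℝ) (k z : ℤ) : ℂ :=
  ((-1 : ℂ) ^ k / (2 * ↑Real.pi * Complex.I)) *
    ∮ w in C(0, r), w ^ (-z - 1) * Complex.exp ((w - 1) * ↑t) * ((w - 1) * w) ^ k

/-- `φ_k(z) = ((-1)^k/(2πi)) ∮_{|v|=ρ} dv v⁻¹ (1+2v) e^(-vt) (1+v)^(z-1) (v(1+v))^(-k)`,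
with the contour a positively oriented circle of radius `ρ ∈ (0,1)` centered at the origin. -/
noncomputable def phi (t ρ : ℝ) (k : ℕ) (z : ℤ) : ℂ :=
  ((-1 : ℂ) ^ k / (2 * ↑Real.pi * Complex.I)) *
    ∮ v in C(0, ρ), v⁻¹ * (1 + 2 * v) * Complex.exp (-v * ↑t) * (1 + v) ^ (z - 1) *
      (v * (1 + v)) ^ (-(k : ℤ))

section CircleIntegral

variable {E : Type*} [NormedAddCommGroup E]

theorem ContinuousOn.comp_circleMap_prod {f : ℂ → ℂ → E} {c₁ c₂ : ℂ} {R₁ R₂ : ℝ}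
    (hf : ContinuousOn (Function.uncurry f) (sphere c₁ |R₁| ×ˢ sphere c₂ |R₂|)) :
    Continuous fun p : ℝ × ℝ => f (circleMap c₁ R₁ p.1) (circleMap c₂ R₂ p.2) :=
  hf.comp_continuous (f := fun p : ℝ × ℝ => (circleMap c₁ R₁ p.1, circleMap c₂ R₂ p.2))
    (by fun_prop) fun p => ⟨circleMap_mem_sphere' c₁ R₁ p.1, circleMap_mem_sphere' c₂ R₂ p.2⟩

variable [NormedSpace ℂ E]

theorem circleIntegral_comp_neg (f : ℂ → E) (R : ℝ) :
    (∮ z in C(0, R), f (-z)) = -∮ z in C(0, R), f z := by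
  have h_shift : ∀ θ : ℝ, circleMap 0 R (θ + π) = -circleMap 0 R θ := fun θ => by
    simp [circleMap, add_mul, Complex.exp_add]
  have h_per : Function.Periodic (fun θ => deriv (circleMap 0 R) θ • f (circleMap 0 R θ))
      (2 * π) := fun θ => by simp [deriv_circleMap, periodic_circleMap 0 R θ]
  calc (∮ z in C(0, R), f (-z))
      = ∫ θ in (0 : ℝ)..2 * π,
          -(deriv (circleMap 0 R) (θ + π) • f (circleMap 0 R (θ + π))) :=
        intervalIntegral.integral_congr fun θ _ => by
          simp only [deriv_circleMap, h_shift, neg_smul, neg_neg, neg_mul]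
    _ = -∫ θ in π..π + 2 * π, deriv (circleMap 0 R) θ • f (circleMap 0 R θ) := by
        rw [intervalIntegral.integral_neg, intervalIntegral.integral_comp_add_right
          (fun θ => deriv (circleMap 0 R) θ • f (circleMap 0 R θ)), zero_add, add_comm]
    _ = -∮ z in C(0, R), f z := by
        rw [h_per.intervalIntegral_add_eq π 0, zero_add]; rfl

theorem circleIntegral_eq_of_differentiableOn_ball_diff_center {f : ℂ → E} {c : ℂ}
    {R r₁ r₂ : ℝ} (hf : DifferentiableOn ℂ f (ball c R \ {c})) (h₁ : r₁ ∈ Ioo 0 R)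
    (h₂ : r₂ ∈ Ioo 0 R) : (∮ z in C(c, r₁), f z) = ∮ z in C(c, r₂), f z := by
  wlog hle : r₁ ≤ r₂ generalizing r₁ r₂
  · exact (this h₂ h₁ (le_of_not_ge hle)).symm
  have h_sub : closedBall c r₂ \ ball c r₁ ⊆ ball c R \ {c} := fun z ⟨hz₂, hz₁⟩ =>
    ⟨closedBall_subset_ball h₂.2 hz₂, fun hzc => hz₁ (hzc ▸ mem_ball_self h₁.1)⟩
  have h_open : IsOpen (ball c R \ {c}) := isOpen_ball.sdiff isClosed_singleton
  refine (circleIntegral_eq_of_differentiable_on_annulus_off_countable h₁.1 hle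
    countable_empty (hf.continuousOn.mono h_sub) fun z hz => ?_).symm
  exact hf.differentiableAt (h_open.mem_nhds
    (h_sub ⟨ball_subset_closedBall hz.1.1, fun h => hz.1.2 (ball_subset_closedBall h)⟩))

theorem DifferentiableOn.circleIntegrable_of_ball_diff_center {f : ℂ → E} {c : ℂ} {R r : ℝ}
    (hf : DifferentiableOn ℂ f (ball c R \ {c})) (hr : r ∈ Ioo 0 R) :
    CircleIntegrable f c r :=
  ContinuousOn.circleIntegrable hr.1.le <| hf.continuousOn.mono fun _ hz =>
    ⟨sphere_subset_closedBall.trans (closedBall_subset_ball hr.2) hz,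
      ne_of_mem_sphere hz hr.1.ne'⟩

theorem ContinuousOn.circleIntegrable_circleIntegral {f : ℂ → ℂ → E} {c₁ c₂ : ℂ}
    {R₁ R₂ : ℝ} (hf : ContinuousOn (Function.uncurry f) (sphere c₁ |R₁| ×ˢ sphere c₂ |R₂|)) :
    CircleIntegrable (fun u => ∮ v in C(c₂, R₂), f u v) c₁ R₁ := by
  refine Continuous.intervalIntegrable ?_ _ _
  refine intervalIntegral.continuous_parametric_intervalIntegral_of_continuous'
    (f := fun θ φ => deriv (circleMap c₂ R₂) φ • f (circleMap c₁ R₁ θ) (circleMap c₂ R₂ φ))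
    ?_ _ _
  simp only [deriv_circleMap]
  exact Continuous.smul (by fun_prop) hf.comp_circleMap_prod

theorem circleIntegral_comm [CompleteSpace E] {f : ℂ → ℂ → E} {c₁ c₂ : ℂ} {R₁ R₂ : ℝ}
    (hf : ContinuousOn (Function.uncurry f) (sphere c₁ |R₁| ×ˢ sphere c₂ |R₂|)) :
    (∮ u in C(c₁, R₁), ∮ v in C(c₂, R₂), f u v) =
      ∮ v in C(c₂, R₂), ∮ u in C(c₁, R₁), f u v := by
  set F : ℝ → ℝ → E := fun θ φ =>
    (deriv (circleMap c₁ R₁) θ * deriv (circleMap c₂ R₂) φ) •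
      f (circleMap c₁ R₁ θ) (circleMap c₂ R₂ φ)
  have hF : Continuous (Function.uncurry F) := by
    simp only [F, Function.uncurry_def, deriv_circleMap]
    exact Continuous.smul (by fun_prop) hf.comp_circleMap_prod
  have hF_int : Integrable (Function.uncurry F)
      ((volume.restrict (Ioc 0 (2 * π))).prod (volume.restrict (Ioc 0 (2 * π)))) := by
    rw [Measure.prod_restrict]
    exact (hF.continuousOn.integrableOn_compact (isCompact_Icc.prod isCompact_Icc)).mono_set
      (prod_mono Ioc_subset_Icc_self Ioc_subset_Icc_self)
  have h_iter : ∀ {a b : ℂ} {ra rb : ℝ} (g : ℂ → ℂ → E),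
      (∮ x in C(a, ra), ∮ y in C(b, rb), g x y) =
        ∫ θ in Ioc 0 (2 * π), ∫ φ in Ioc 0 (2 * π),
          (deriv (circleMap a ra) θ * deriv (circleMap b rb) φ) •
            g (circleMap a ra θ) (circleMap b rb φ) := fun g => by
    simp only [circleIntegral, intervalIntegral.integral_of_le Real.two_pi_pos.le, mul_smul,
      ← integral_smul]
  rw [h_iter, h_iter, integral_integral_swap hF_int]
  simp only [F, mul_comm]

theorem circleIntegral_circleIntegral_eq_zero_of_differentiableOn [CompleteSpace E]
    {f : ℂ → ℂ → E} {c₁ c₂ : ℂ} {R₁ R₂ : ℝ} (hR₁ : 0 ≤ R₁) (hR₂ : 0 ≤ R₂)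
    (hf : ContinuousOn (Function.uncurry f) (sphere c₁ R₁ ×ˢ sphere c₂ R₂))
    (hd : ∀ v ∈ sphere c₂ R₂, DifferentiableOn ℂ (f · v) (closedBall c₁ R₁)) :
    (∮ u in C(c₁, R₁), ∮ v in C(c₂, R₂), f u v) = 0 := by
  rw [circleIntegral_comm (by rwa [abs_of_nonneg hR₁, abs_of_nonneg hR₂]),
    circleIntegral.integral_congr hR₂ fun v hv =>
      ((hd v hv).diffContOnCl_ball subset_rfl).circleIntegral_eq_zero hR₁]
  simp [circleIntegral]

theorem sum_circleIntegral_mul_circleIntegral {ι : Type*} (s : Finset ι) {f g : ι → ℂ → ℂ}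
    {c₁ c₂ : ℂ} {R₁ R₂ : ℝ} (hf : ∀ i ∈ s, CircleIntegrable (f i) c₁ R₁)
    (hg : ∀ i ∈ s, CircleIntegrable (g i) c₂ R₂) :
    ∑ i ∈ s, (∮ u in C(c₁, R₁), f i u) * (∮ v in C(c₂, R₂), g i v) =
      ∮ u in C(c₁, R₁), ∮ v in C(c₂, R₂), ∑ i ∈ s, f i u * g i v := by
  have h_inner : ∀ u, (∮ v in C(c₂, R₂), ∑ i ∈ s, f i u * g i v) =
      ∑ i ∈ s, f i u * ∮ v in C(c₂, R₂), g i v := fun u => by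
    refine (circleIntegral.integral_fun_sum fun i hi => ?_).trans ?_
    · exact IntervalIntegrable.const_mul (hg i hi) _
    · simp only [circleIntegral.integral_const_mul]
  simp_rw [h_inner]
  refine Eq.symm <| (circleIntegral.integral_fun_sum fun i hi => ?_).trans <|
    Finset.sum_congr rfl fun i _ => ?_
  · exact IntervalIntegrable.mul_const (hf i hi) _
  · simpa only [smul_eq_mul] using
      circleIntegral.integral_smul_const (f i) (∮ v in C(c₂, R₂), g i v) c₁ R₁

end CircleIntegral

theorem one_add_ne_zero_of_norm_lt_one {u : ℂ} (h : ‖u‖ < 1) : 1 + u ≠ 0 := fun h₀ => by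
  simp [show u = -1 by linear_combination h₀] at h

theorem add_add_one_ne_zero_of_norm_add_norm_lt_one {u v : ℂ} (h : ‖u‖ + ‖v‖ < 1) :
    u + v + 1 ≠ 0 := by
  rw [add_comm]
  exact one_add_ne_zero_of_norm_lt_one ((norm_add_le u v).trans_lt h)

theorem differentiableOn_ball_one_diff_zero {f : ℂ → ℂ}
    (hf : ∀ u : ℂ, u ≠ 0 → 1 + u ≠ 0 → DifferentiableAt ℂ f u) :
    DifferentiableOn ℂ f (ball 0 1 \ {0}) := fun u ⟨hu₁, hu⟩ =>
  (hf u hu (one_add_ne_zero_of_norm_lt_one (mem_ball_zero_iff.mp hu₁))).differentiableWithinAt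

namespace AlternatingKernel

variable (t : ℝ)

noncomputable def psiIntegrand (z k : ℤ) (u : ℂ) : ℂ :=
  u ^ (-z - 1) * exp (-u * t) * (u * (1 + u)) ^ k

noncomputable def phiIntegrand (z : ℤ) (k : ℕ) (v : ℂ) : ℂ :=
  v⁻¹ * (1 + 2 * v) * exp (-v * t) * (1 + v) ^ (z - 1) * (v * (1 + v)) ^ (-(k : ℤ))

noncomputable def kernelIntegrand (e b : ℤ) (u : ℂ) : ℂ :=
  u ^ e * (1 + u) ^ b * exp (-(2 * t) * u)

noncomputable def polarPart (z₁ z₂ m : ℤ) (u v : ℂ) : ℂ :=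
  u ^ (-z₁ - 1) * (u * (1 + u)) ^ m * exp (-u * t) *
    ((1 + 2 * v) * exp (-v * t) * (1 + v) ^ z₂) / (u + v + 1)

/-- Written with `u ^ (n₁ - z₁ - 1) * (1 + u) ^ n₁` rather than
`u ^ (-z₁ - 1) * (u * (1 + u)) ^ n₁`: the two agree for `u ≠ 0`, but only the first is
holomorphic at `u = 0` when `z₁ < n₁`. -/
noncomputable def regularPart (z₁ z₂ : ℤ) (n₁ n₂ : ℕ) (u v : ℂ) : ℂ :=
  u ^ ((n₁ : ℤ) - z₁ - 1) * (1 + u) ^ n₁ * exp (-u * t) *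
    ((1 + 2 * v) * exp (-v * t) * (1 + v) ^ z₂ * (v * (1 + v)) ^ (-(n₂ : ℤ))) /
      ((v - u) * (u + v + 1))

variable {t}

theorem differentiableOn_psiIntegrand (z k : ℤ) :
    DifferentiableOn ℂ (psiIntegrand t z k) (ball 0 1 \ {0}) :=
  differentiableOn_ball_one_diff_zero fun u hu hu₁ => by
    unfold psiIntegrand
    fun_prop (disch := simp [*])

theorem differentiableOn_phiIntegrand (z : ℤ) (k : ℕ) :
    DifferentiableOn ℂ (phiIntegrand t z k) (ball 0 1 \ {0}) :=
  differentiableOn_ball_one_diff_zero fun v hv hv₁ => by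
    unfold phiIntegrand
    fun_prop (disch := simp [*])

theorem differentiableOn_kernelIntegrand (e b : ℤ) :
    DifferentiableOn ℂ (kernelIntegrand t e b) (ball 0 1 \ {0}) :=
  differentiableOn_ball_one_diff_zero fun u hu hu₁ => by
    unfold kernelIntegrand
    fun_prop (disch := simp [*])

theorem psi_eq_circleIntegral_psiIntegrand {r s : ℝ} (hr : r ∈ Ioo 0 1) (hs : s ∈ Ioo 0 1)
    (k z : ℤ) :
    psi t r k z =
      (-1) ^ (k - z) * exp (-t) / (2 * π * I) * ∮ u in C(0, s), psiIntegrand t z k u := by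
  have h_neg : ∀ u : ℂ, (-u) ^ (-z - 1) * exp ((-u - 1) * t) * ((-u - 1) * -u) ^ k =
      -((-1) ^ (-z) * exp (-t)) * psiIntegrand t z k u := fun u => by
    rw [neg_eq_neg_one_mul u, mul_zpow, zpow_sub_one₀ (by norm_num : (-1 : ℂ) ≠ 0),
      psiIntegrand, show (-1 * u - 1) * (-1 * u) = u * (1 + u) by ring,
      show (-1 * u - 1) * (t : ℂ) = -t + -u * t by ring, exp_add]
    ring
  have h_int : (∮ w in C(0, r), w ^ (-z - 1) * exp ((w - 1) * t) * ((w - 1) * w) ^ k) =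
      (-1) ^ (-z) * exp (-t) * ∮ u in C(0, r), psiIntegrand t z k u := by
    rw [← neg_neg (∮ w in C(0, r), _), ← circleIntegral_comp_neg]
    simp only [h_neg, circleIntegral.integral_const_mul]
    ring
  rw [psi, h_int, circleIntegral_eq_of_differentiableOn_ball_diff_center
    (differentiableOn_psiIntegrand z k) hr hs, sub_eq_add_neg,
    zpow_add₀ (by norm_num : (-1 : ℂ) ≠ 0)]
  ring

theorem phi_eq_circleIntegral_phiIntegrand {r s : ℝ} (hr : r ∈ Ioo 0 1) (hs : s ∈ Ioo 0 1)
    (k : ℕ) (z : ℤ) :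
    phi t r k z = (-1) ^ k / (2 * π * I) * ∮ v in C(0, s), phiIntegrand t z k v := by
  rw [phi, ← circleIntegral_eq_of_differentiableOn_ball_diff_center
    (differentiableOn_phiIntegrand z k) hr hs]
  rfl

theorem circleIntegral_eq_kernelIntegrand {ρ s : ℝ} (hρ : ρ ∈ Ioo 0 1) (hs : s ∈ Ioo 0 1)
    (e b : ℤ) :
    (∮ v in C(0, ρ), (1 + v) ^ b * (-v) ^ e * exp (-t * (1 + 2 * v))) =
      (-1) ^ e * exp (-t) * ∮ u in C(0, s), kernelIntegrand t e b u := by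
  have h_pt : ∀ v : ℂ, (1 + v) ^ b * (-v) ^ e * exp (-t * (1 + 2 * v)) =
      (-1) ^ e * exp (-t) * kernelIntegrand t e b v := fun v => by
    rw [kernelIntegrand, neg_eq_neg_one_mul v, mul_zpow,
      show -(t : ℂ) * (1 + 2 * v) = -t + -(2 * t) * v by ring, exp_add]
    ring
  simp only [h_pt, circleIntegral.integral_const_mul]
  rw [circleIntegral_eq_of_differentiableOn_ball_diff_center
    (differentiableOn_kernelIntegrand e b) hρ hs]

theorem sum_psiIntegrand_mul_phiIntegrand (z₁ z₂ : ℤ) (n₁ n₂ : ℕ) {u v : ℂ} (hu : u ≠ 0)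
    (hu₁ : 1 + u ≠ 0) (hv : v ≠ 0) (hv₁ : 1 + v ≠ 0) (hvu : v ≠ u) (huv : u + v + 1 ≠ 0) :
    ∑ k ∈ Finset.range n₂,
        psiIntegrand t z₁ ((n₁ : ℤ) - n₂ + k) u * phiIntegrand t z₂ k v =
      polarPart t z₁ z₂ ((n₁ : ℤ) - n₂) u v / (v - u) - regularPart t z₁ z₂ n₁ n₂ u v := by
  have hX : u * (1 + u) ≠ 0 := mul_ne_zero hu hu₁
  have hY : v * (1 + v) ≠ 0 := mul_ne_zero hv hv₁
  have hXY : u * (1 + u) - v * (1 + v) ≠ 0 := by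
    rw [show u * (1 + u) - v * (1 + v) = -((v - u) * (u + v + 1)) by ring, neg_ne_zero]
    exact mul_ne_zero (sub_ne_zero.mpr hvu) huv
  have hq : u * (1 + u) / (v * (1 + v)) ≠ 1 := fun h =>
    hXY (by rw [(div_eq_one_iff_eq hY).mp h, sub_self])
  have h_summand : ∀ k : ℕ,
      psiIntegrand t z₁ ((n₁ : ℤ) - n₂ + k) u * phiIntegrand t z₂ k v =
        u ^ (-z₁ - 1) * exp (-u * t) * (u * (1 + u)) ^ ((n₁ : ℤ) - n₂) *
          (v⁻¹ * (1 + 2 * v) * exp (-v * t) * (1 + v) ^ (z₂ - 1)) *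
            (u * (1 + u) / (v * (1 + v))) ^ k := fun k => by
    rw [psiIntegrand, phiIntegrand, zpow_add₀ hX, zpow_neg, zpow_natCast, zpow_natCast,
      div_pow]
    ring
  have h_regular : u ^ ((n₁ : ℤ) - z₁ - 1) * (1 + u) ^ n₁ =
      u ^ (-z₁ - 1) * (u * (1 + u)) ^ ((n₁ : ℤ) - n₂) * (u * (1 + u)) ^ n₂ := by
    rw [mul_assoc, ← zpow_natCast (u * (1 + u)) n₂, ← zpow_add₀ hX, sub_add_cancel,
      zpow_natCast, mul_pow, ← mul_assoc, show (n₁ : ℤ) - z₁ - 1 = -z₁ - 1 + n₁ by ring,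
      zpow_add₀ hu, zpow_natCast]
  have h_v : (1 + v) ^ z₂ = (1 + v) ^ (z₂ - 1) * (1 + v) := by
    rw [← zpow_add_one₀ hv₁, sub_add_cancel]
  rw [Finset.sum_congr rfl fun k _ => h_summand k, ← Finset.mul_sum, geom_sum_eq hq,
    polarPart, regularPart, h_regular, h_v, zpow_neg, zpow_natCast, div_pow]
  field_simp
  ring

theorem polarPart_self (z₁ z₂ m : ℤ) {u : ℂ} (hu : u ≠ 0) (hu₁ : 1 + u ≠ 0)
    (hu₂ : 1 + 2 * u ≠ 0) :
    polarPart t z₁ z₂ m u u = kernelIntegrand t (m - z₁ - 1) (m + z₂) u := by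
  rw [polarPart, kernelIntegrand, mul_zpow, show m - z₁ - 1 = -z₁ - 1 + m by ring,
    zpow_add₀ hu, zpow_add₀ hu₁, show -(2 * (t : ℂ)) * u = -u * t + -u * t by ring, exp_add,
    show u + u + 1 = 1 + 2 * u by ring, div_eq_iff hu₂]
  ring

theorem differentiableOn_polarPart (z₁ z₂ m : ℤ) {u : ℂ} (hu : ‖u‖ = 4⁻¹) :
    DifferentiableOn ℂ (polarPart t z₁ z₂ m u) (closedBall 0 2⁻¹) := fun v hv => by
  rw [mem_closedBall_zero_iff] at hv
  have hv₁ : 1 + v ≠ 0 := one_add_ne_zero_of_norm_lt_one (by linarith)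
  have huv : u + v + 1 ≠ 0 := add_add_one_ne_zero_of_norm_add_norm_lt_one (by linarith)
  refine DifferentiableAt.differentiableWithinAt ?_
  unfold polarPart
  fun_prop (disch := first | assumption | exact Or.inl hv₁)

theorem continuousOn_regularPart {z₁ : ℤ} {n₁ : ℕ} (hz₁ : z₁ < n₁) (z₂ : ℤ) (n₂ : ℕ) :
    ContinuousOn (Function.uncurry (regularPart t z₁ z₂ n₁ n₂))
      (sphere 0 4⁻¹ ×ˢ sphere 0 2⁻¹) := fun p ⟨hu, hv⟩ => by
  rw [mem_sphere_zero_iff_norm] at hu hv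
  have hn : 0 ≤ (n₁ : ℤ) - z₁ - 1 := by omega
  have hv₁ : 1 + p.2 ≠ 0 := one_add_ne_zero_of_norm_lt_one (by linarith)
  have hY : p.2 * (1 + p.2) ≠ 0 := mul_ne_zero (norm_pos_iff.mp (by linarith)) hv₁
  have hvu : p.2 - p.1 ≠ 0 := sub_ne_zero.mpr fun h => by norm_num [h, hu] at hv
  have huv : p.1 + p.2 + 1 ≠ 0 := add_add_one_ne_zero_of_norm_add_norm_lt_one (by linarith)
  have h_left : ContinuousAt (fun u : ℂ => u ^ ((n₁ : ℤ) - z₁ - 1) * (1 + u) ^ n₁ *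
      exp (-u * t)) p.1 := by
    fun_prop (disch := exact Or.inr hn)
  have h_right : ContinuousAt (fun v : ℂ => (1 + 2 * v) * exp (-v * t) * (1 + v) ^ z₂ *
      (v * (1 + v)) ^ (-(n₂ : ℤ))) p.2 := by
    fun_prop (disch := first | exact Or.inl hv₁ | exact Or.inl hY)
  exact (((h_left.comp continuousAt_fst).mul (h_right.comp continuousAt_snd)).div
    (by fun_prop) (mul_ne_zero hvu huv)).continuousWithinAt

theorem circleIntegral_circleIntegral_regularPart {z₁ : ℤ} {n₁ : ℕ} (hz₁ : z₁ < n₁) (z₂ : ℤ)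
    (n₂ : ℕ) : (∮ u in C(0, 4⁻¹), ∮ v in C(0, 2⁻¹), regularPart t z₁ z₂ n₁ n₂ u v) = 0 := by
  refine circleIntegral_circleIntegral_eq_zero_of_differentiableOn (by norm_num) (by norm_num)
    (continuousOn_regularPart hz₁ z₂ n₂) fun v hv u hu => ?_
  rw [mem_sphere_zero_iff_norm] at hv
  rw [mem_closedBall_zero_iff] at hu
  have hn : 0 ≤ (n₁ : ℤ) - z₁ - 1 := by omega
  have hvu : v - u ≠ 0 := sub_ne_zero.mpr fun h => by rw [h] at hv; linarith
  have huv : u + v + 1 ≠ 0 := add_add_one_ne_zero_of_norm_add_norm_lt_one (by linarith)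
  have hden : (v - u) * (u + v + 1) ≠ 0 := mul_ne_zero hvu huv
  refine DifferentiableAt.differentiableWithinAt ?_
  unfold regularPart
  fun_prop (disch := first | assumption | exact Or.inr hn)

theorem circleIntegral_sum_psiIntegrand_mul_phiIntegrand {z₁ : ℤ} {n₁ : ℕ} (hz₁ : z₁ < n₁)
    (z₂ : ℤ) (n₂ : ℕ) {u : ℂ} (hu : ‖u‖ = 4⁻¹) :
    (∮ v in C(0, 2⁻¹), ∑ k ∈ Finset.range n₂,
        psiIntegrand t z₁ ((n₁ : ℤ) - n₂ + k) u * phiIntegrand t z₂ k v) =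
      2 * π * I * kernelIntegrand t ((n₁ : ℤ) - n₂ - z₁ - 1) (n₁ - n₂ + z₂) u -
        ∮ v in C(0, 2⁻¹), regularPart t z₁ z₂ n₁ n₂ u v := by
  have hu₀ : u ≠ 0 := norm_pos_iff.mp (by linarith)
  have hu₁ : 1 + u ≠ 0 := one_add_ne_zero_of_norm_lt_one (by linarith)
  have hu₂ : 1 + 2 * u ≠ 0 := one_add_ne_zero_of_norm_lt_one (by simp [hu]; norm_num)
  have h_split : EqOn
      (fun v => ∑ k ∈ Finset.range n₂,
        psiIntegrand t z₁ ((n₁ : ℤ) - n₂ + k) u * phiIntegrand t z₂ k v)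
      (fun v => polarPart t z₁ z₂ ((n₁ : ℤ) - n₂) u v / (v - u) -
        regularPart t z₁ z₂ n₁ n₂ u v) (sphere 0 2⁻¹) := fun v hv => by
    rw [mem_sphere_zero_iff_norm] at hv
    exact sum_psiIntegrand_mul_phiIntegrand z₁ z₂ n₁ n₂ hu₀ hu₁ (norm_pos_iff.mp (by linarith))
      (one_add_ne_zero_of_norm_lt_one (by linarith)) (fun h => by norm_num [h, hu] at hv)
      (add_add_one_ne_zero_of_norm_add_norm_lt_one (by linarith))
  have h_polar := differentiableOn_polarPart (t := t) z₁ z₂ ((n₁ : ℤ) - n₂) hu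
  have h_polar_int : CircleIntegrable
      (fun v => polarPart t z₁ z₂ ((n₁ : ℤ) - n₂) u v / (v - u)) 0 2⁻¹ := by
    refine ContinuousOn.circleIntegrable (by norm_num) fun v hv => ?_
    refine (h_polar.continuousOn.mono sphere_subset_closedBall v hv).div
      (continuousWithinAt_id.sub continuousWithinAt_const) (sub_ne_zero.mpr ?_)
    rintro rfl
    norm_num [mem_sphere_zero_iff_norm.mp hv] at hu
  have h_regular_int : CircleIntegrable (regularPart t z₁ z₂ n₁ n₂ u) 0 2⁻¹ :=
    ContinuousOn.circleIntegrable (by norm_num) <|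
      (continuousOn_regularPart hz₁ z₂ n₂).comp (f := fun v => (u, v)) (by fun_prop)
        fun v hv => ⟨mem_sphere_zero_iff_norm.mpr hu, hv⟩
  have hu_ball : u ∈ ball (0 : ℂ) 2⁻¹ := by rw [mem_ball_zero_iff, hu]; norm_num
  rw [circleIntegral.integral_congr (by norm_num) h_split,
    circleIntegral.integral_sub h_polar_int h_regular_int,
    circleIntegral_div_sub_of_differentiable_on_off_countable countable_empty hu_ball
      h_polar.continuousOn fun v hv => h_polar.differentiableAt (closedBall_mem_nhds_of_mem hv.1),
    polarPart_self z₁ z₂ _ hu₀ hu₁ hu₂]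

theorem circleIntegral_circleIntegral_sum_psiIntegrand_mul_phiIntegrand {z₁ : ℤ} {n₁ : ℕ}
    (hz₁ : z₁ < n₁) (z₂ : ℤ) (n₂ : ℕ) :
    (∮ u in C(0, 4⁻¹), ∮ v in C(0, 2⁻¹), ∑ k ∈ Finset.range n₂,
        psiIntegrand t z₁ ((n₁ : ℤ) - n₂ + k) u * phiIntegrand t z₂ k v) =
      2 * π * I *
        ∮ u in C(0, 4⁻¹), kernelIntegrand t ((n₁ : ℤ) - n₂ - z₁ - 1) (n₁ - n₂ + z₂) u := by
  have h_kernel_int : CircleIntegrable (fun u =>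
      2 * π * I * kernelIntegrand t ((n₁ : ℤ) - n₂ - z₁ - 1) (n₁ - n₂ + z₂) u) 0 4⁻¹ :=
    IntervalIntegrable.const_mul
      ((differentiableOn_kernelIntegrand _ _).circleIntegrable_of_ball_diff_center
        (by norm_num)) _
  have h_regular_int : CircleIntegrable
      (fun u => ∮ v in C(0, 2⁻¹), regularPart t z₁ z₂ n₁ n₂ u v) 0 4⁻¹ :=
    ContinuousOn.circleIntegrable_circleIntegral (by simpa using continuousOn_regularPart hz₁ z₂ n₂)
  rw [circleIntegral.integral_congr (by norm_num) fun u hu =>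
      circleIntegral_sum_psiIntegrand_mul_phiIntegrand hz₁ z₂ n₂ (mem_sphere_zero_iff_norm.mp hu),
    circleIntegral.integral_sub h_kernel_int h_regular_int,
    circleIntegral_circleIntegral_regularPart hz₁, sub_zero, circleIntegral.integral_const_mul]

end AlternatingKernel

open AlternatingKernel in
theorem statement0_general (t : ℝ) (n1 n2 : ℕ)
    (z1 z2 : ℤ) (hz1 : z1 < (n1 : ℤ))
    (r r' ρ : ℝ) (hr : r ∈ Set.Ioo (0 : ℝ) 1) (hr' : r' ∈ Set.Ioo (0 : ℝ) 1)
    (hρ : ρ ∈ Set.Ioo (0 : ℝ) 1) :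
    ∑ k ∈ Finset.range n2, psi t r ((n1 : ℤ) - (n2 : ℤ) + k) z1 * phi t r' k z2 =
      (-1) / (2 * ↑Real.pi * Complex.I) *
        ∮ v in C(0, ρ), (1 + v) ^ (z2 + (n1 : ℤ) - (n2 : ℤ)) *
          (-v) ^ (-(z1 - (n1 : ℤ) + (n2 : ℤ) + 1)) * Complex.exp (-↑t * (1 + 2 * v)) := by
  have hs : (4 : ℝ)⁻¹ ∈ Ioo (0 : ℝ) 1 := by norm_num
  have hs' : (2 : ℝ)⁻¹ ∈ Ioo (0 : ℝ) 1 := by norm_num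
  have h_term : ∀ k : ℕ, psi t r ((n1 : ℤ) - n2 + k) z1 * phi t r' k z2 =
      (-1) ^ ((n1 : ℤ) - n2 - z1) * exp (-t) / (2 * π * I) ^ 2 *
        ((∮ u in C(0, 4⁻¹), psiIntegrand t z1 ((n1 : ℤ) - n2 + k) u) *
          ∮ v in C(0, 2⁻¹), phiIntegrand t z2 k v) := fun k => by
    have h_sign : ((-1 : ℂ) ^ k) ^ 2 = 1 := by rw [← pow_mul, mul_comm, pow_mul]; norm_num
    rw [psi_eq_circleIntegral_psiIntegrand hr hs, phi_eq_circleIntegral_phiIntegrand hr' hs',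
      show (n1 : ℤ) - n2 + k - z1 = n1 - n2 - z1 + k by ring, zpow_add₀ (by norm_num),
      zpow_natCast]
    field_simp
    rw [h_sign, one_mul]
  rw [Finset.sum_congr rfl fun k _ => h_term k, ← Finset.mul_sum,
    sum_circleIntegral_mul_circleIntegral _
      (fun k _ => (differentiableOn_psiIntegrand _ _).circleIntegrable_of_ball_diff_center hs)
      (fun k _ => (differentiableOn_phiIntegrand _ _).circleIntegrable_of_ball_diff_center hs'),
    circleIntegral_circleIntegral_sum_psiIntegrand_mul_phiIntegrand hz1,
    circleIntegral_eq_kernelIntegrand hρ hs,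
    show -(z1 - n1 + n2 + 1) = (n1 : ℤ) - n2 - z1 - 1 by ring,
    show z2 + n1 - n2 = (n1 : ℤ) - n2 + z2 by ring, zpow_sub_one₀ (by norm_num : (-1 : ℂ) ≠ 0)]
  field_simp

/-- For `t > 0`, integers `n1, n2 ≥ 1` and integers `z1 < n1`, `z2 < n2`,
`∑_{k=0}^{n2-1} ψ_{n1-n2+k}(z1) φ_k(z2)
  = (-1/(2πi)) ∮_{|v|=ρ} dv (1+v)^(z2+n1-n2) (-v)^(-(z1-n1+n2+1)) e^(-t(1+2v))`,
the contour being a positively oriented circle of any radius `ρ ∈ (0,1)` centered at the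
origin (the main term of the extended kernel for the alternating initial configuration). -/
theorem statement0 (t : ℝ) (ht : 0 < t) (n1 n2 : ℕ) (hn1 : 1 ≤ n1) (hn2 : 1 ≤ n2)
    (z1 z2 : ℤ) (hz1 : z1 < (n1 : ℤ)) (hz2 : z2 < (n2 : ℤ))
    (r r' ρ : ℝ) (hr : r ∈ Set.Ioo (0 : ℝ) 1) (hr' : r' ∈ Set.Ioo (0 : ℝ) 1)
    (hρ : ρ ∈ Set.Ioo (0 : ℝ) 1) :
    ∑ k ∈ Finset.range n2, psi t r ((n1 : ℤ) - (n2 : ℤ) + k) z1 * phi t r' k z2 =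
      (-1) / (2 * ↑Real.pi * Complex.I) *
        ∮ v in C(0, ρ), (1 + v) ^ (z2 + (n1 : ℤ) - (n2 : ℤ)) *
          (-v) ^ (-(z1 - (n1 : ℤ) + (n2 : ℤ) + 1)) * Complex.exp (-↑t * (1 + 2 * v)) :=
  statement0_general t n1 n2 z1 z2 hz1 r r' ρ hr hr' hρ
end

section
/- Let t > 0, let N ≥ 1 and n1, n2 be integers with 1 ≤ n1, n2, and let z1, z2 be integers. Let ρ ∈ (0,1) be small enough that ρ(1+ρ) < 1/4. Then ∑_{k=0}^{n2−1} ψ_{n1−n2+k}(z1) · φ_k(z2) = ((−1)^{n1−n2}/(2πi)²) ∮_{|v|=ρ} dv (1+2v)(1+v)^{z2} e^{−vt} (v(1+v))^{−n2} ∮_{|1+u|=1/2} du e^{ut} (u(1+u))^{n1} (1+u)^{−z1−1} (u(1+u) − v(1+v))^{−1}, where the inner contour is the positively oriented circle of radius 1/2 centered at u = −1 (on which |u(1+u)| ≥ 1/4 > |v(1+v)|), and the outer contour is the positively oriented circle of radius ρ centered at the origin. -/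
open MeasureTheory Set Metric Complex intervalIntegral


/-- Fubini for double interval integrals of a jointly continuous function. -/
lemma myIntervalSwap (g : ℝ → ℝ → ℂ) (hg : Continuous fun p : ℝ × ℝ => g p.1 p.2)
    (a b : ℝ) (hab : a ≤ b) :
    ∫ x in a..b, ∫ y in a..b, g x y = ∫ y in a..b, ∫ x in a..b, g x y := by
  simp only [intervalIntegral.integral_of_le hab]
  apply MeasureTheory.integral_integral_swap
  rw [Measure.prod_restrict]
  exact (hg.continuousOn.integrableOn_compact (isCompact_Icc.prod isCompact_Icc)).mono_set
    (Set.prod_mono Set.Ioc_subset_Icc_self Set.Ioc_subset_Icc_self)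

lemma myCircleSwap {c₁ c₂ : ℂ} {R₁ R₂ : ℝ} (h₁ : 0 ≤ R₁) (h₂ : 0 ≤ R₂) (f : ℂ → ℂ → ℂ)
    (hf : ContinuousOn (fun p : ℂ × ℂ => f p.1 p.2) (sphere c₁ R₁ ×ˢ sphere c₂ R₂)) :
    (∮ z in C(c₁, R₁), ∮ w in C(c₂, R₂), f z w) = ∮ w in C(c₂, R₂), ∮ z in C(c₁, R₁), f z w := by
  have hc : Continuous fun p : ℝ × ℝ => f (circleMap c₁ R₁ p.1) (circleMap c₂ R₂ p.2) := by
    exact hf.comp_continuous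
      (((continuous_circleMap c₁ R₁).comp continuous_fst).prodMk
        ((continuous_circleMap c₂ R₂).comp continuous_snd))
      (fun p => ⟨circleMap_mem_sphere c₁ h₁ p.1, circleMap_mem_sphere c₂ h₂ p.2⟩)
  have hg : Continuous fun p : ℝ × ℝ =>
      (circleMap 0 R₁ p.1 * Complex.I) * ((circleMap 0 R₂ p.2 * Complex.I) *
        f (circleMap c₁ R₁ p.1) (circleMap c₂ R₂ p.2)) := by
    apply Continuous.mul
    · exact ((continuous_circleMap 0 R₁).comp continuous_fst).mul continuous_const
    · exact (((continuous_circleMap 0 R₂).comp continuous_snd).mul continuous_const).mul hc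
  simp only [circleIntegral, deriv_circleMap, smul_eq_mul]
  rw [show (∫ θ in (0:ℝ)..2*Real.pi, circleMap 0 R₁ θ * Complex.I *
        ∫ φ in (0:ℝ)..2*Real.pi, circleMap 0 R₂ φ * Complex.I * f (circleMap c₁ R₁ θ) (circleMap c₂ R₂ φ))
      = ∫ θ in (0:ℝ)..2*Real.pi, ∫ φ in (0:ℝ)..2*Real.pi, (circleMap 0 R₁ θ * Complex.I) *
        ((circleMap 0 R₂ φ * Complex.I) * f (circleMap c₁ R₁ θ) (circleMap c₂ R₂ φ)) from by
      congr 1; funext θ; rw [← intervalIntegral.integral_const_mul]]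
  rw [myIntervalSwap _ hg 0 (2*Real.pi) (by positivity)]
  congr 1; funext φ
  rw [← intervalIntegral.integral_const_mul]
  congr 1; funext θ; ring



/-- Pull a finite sum out of a circle integral (continuous summands). -/
lemma myCircleSum {R : ℝ} (hR : 0 ≤ R) (c : ℂ) (n : ℕ) (f : ℕ → ℂ → ℂ)
    (hf : ∀ k ∈ Finset.range n, ContinuousOn (f k) (sphere c R)) :
    (∮ z in C(c, R), ∑ k ∈ Finset.range n, f k z)
      = ∑ k ∈ Finset.range n, ∮ z in C(c, R), f k z := by
  simp only [circleIntegral, deriv_circleMap, smul_eq_mul, Finset.mul_sum]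
  rw [intervalIntegral.integral_finset_sum]
  intro k hk
  apply Continuous.intervalIntegrable
  exact ((continuous_circleMap 0 R).mul continuous_const).mul
    ((hf k hk).comp_continuous (continuous_circleMap c R) (circleMap_mem_sphere c hR))

/-- Translation of a circle integral. -/
lemma myCircleTranslate (g : ℂ → ℂ) (c d : ℂ) (R : ℝ) :
    (∮ u in C(c + d, R), g u) = ∮ w in C(d, R), g (c + w) := by
  simp only [circleIntegral, deriv_circleMap]
  congr 1; funext θ; congr 1
  simp [circleMap, add_assoc]

/-- The geometric sum identity. -/
lemma myKeySum (a b : ℂ) (ha : a ≠ 0) (hb : b ≠ 0) (hab : a ≠ b) (n1 n2 : ℕ) :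
    ∑ k ∈ Finset.range n2, a ^ ((n1 : ℤ) - (n2 : ℤ) + (k : ℤ)) * b ^ (-(k : ℤ))
      = (a ^ (n1 : ℤ) * b ^ ((1 : ℤ) - (n2 : ℤ)) - a ^ ((n1 : ℤ) - (n2 : ℤ)) * b) * (a - b)⁻¹ := by
  have hab' : a - b ≠ 0 := sub_ne_zero.mpr hab
  rw [← div_eq_mul_inv, eq_div_iff hab']
  have hbp : b ^ ((n2 : ℤ) - 1) ≠ 0 := zpow_ne_zero _ hb
  apply mul_right_cancel₀ hbp
  rw [mul_right_comm, Finset.sum_mul]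
  have h1 : ∀ k ∈ Finset.range n2,
      a ^ ((n1 : ℤ) - (n2 : ℤ) + (k : ℤ)) * b ^ (-(k : ℤ)) * b ^ ((n2 : ℤ) - 1)
        = a ^ ((n1 : ℤ) - (n2 : ℤ)) * (a ^ k * b ^ (n2 - 1 - k)) := by
    intro k hk
    rw [Finset.mem_range] at hk
    have hc : ((n2 - 1 - k : ℕ) : ℤ) = -(k : ℤ) + ((n2 : ℤ) - 1) := by omega
    rw [zpow_add₀ ha, ← zpow_natCast b (n2 - 1 - k), hc, zpow_add₀ hb, zpow_natCast a k]
    ring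
  rw [Finset.sum_congr rfl h1, ← Finset.mul_sum, mul_assoc, geom_sum₂_mul]
  have h2 : a ^ (n1 : ℤ) = a ^ ((n1 : ℤ) - (n2 : ℤ)) * a ^ (n2 : ℕ) := by
    rw [← zpow_natCast a n2, ← zpow_add₀ ha]; ring_nf
  have h3 : b ^ ((1 : ℤ) - (n2 : ℤ)) * b ^ ((n2 : ℤ) - 1) = 1 := by
    rw [← zpow_add₀ hb, show (1:ℤ) - (n2:ℤ) + ((n2:ℤ) - 1) = 0 by ring, zpow_zero]
  have h4 : b * b ^ ((n2 : ℤ) - 1) = b ^ (n2 : ℕ) := by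
    rw [← zpow_natCast b n2, show ((n2:ℕ):ℤ) = 1 + ((n2:ℤ) - 1) by ring, zpow_add₀ hb, zpow_one]; norm_num
  calc a ^ ((n1 : ℤ) - (n2 : ℤ)) * (a ^ n2 - b ^ n2)
      = (a ^ ((n1 : ℤ) - (n2 : ℤ)) * a ^ (n2:ℕ)) * (b ^ ((1:ℤ) - (n2:ℤ)) * b ^ ((n2:ℤ) - 1))
        - a ^ ((n1 : ℤ) - (n2 : ℤ)) * (b * b ^ ((n2:ℤ) - 1)) := by rw [h3, h4]; ring
    _ = (a ^ (n1 : ℤ) * b ^ ((1 : ℤ) - (n2 : ℤ)) - a ^ ((n1 : ℤ) - (n2 : ℤ)) * b)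
        * b ^ ((n2 : ℤ) - 1) := by rw [h2]; ring



lemma myDiffPsi (t : ℝ) (z j : ℤ) {w : ℂ} (hw0 : w ≠ 0) (hw1 : w ≠ 1) :
    DifferentiableAt ℂ
      (fun w : ℂ => w ^ (-z - 1) * Complex.exp ((w - 1) * (t : ℂ)) * ((w - 1) * w) ^ j) w := by
  have h1 : DifferentiableAt ℂ (fun w : ℂ => w ^ (-z - 1)) w :=
    differentiableAt_zpow.mpr (Or.inl hw0)
  have h2 : DifferentiableAt ℂ (fun w : ℂ => Complex.exp ((w - 1) * (t : ℂ))) w :=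
    ((differentiableAt_id.sub_const 1).mul_const _).cexp
  have h3 : DifferentiableAt ℂ (fun w : ℂ => ((w - 1) * w) ^ j) w := by
    have hb : (w - 1) * w ≠ 0 := mul_ne_zero (sub_ne_zero.mpr hw1) hw0
    exact ((differentiableAt_id.sub_const 1).mul differentiableAt_id).zpow (Or.inl hb)
  exact (h1.mul h2).mul h3

lemma myDiffPhi (t : ℝ) (z : ℤ) (k : ℕ) {v : ℂ} (hv0 : v ≠ 0) (hv1 : (1 : ℂ) + v ≠ 0) :
    DifferentiableAt ℂ
      (fun v : ℂ => v⁻¹ * (1 + 2 * v) * Complex.exp (-v * (t : ℂ)) * (1 + v) ^ (z - 1) *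
        (v * (1 + v)) ^ (-(k : ℤ))) v := by
  have h0 : DifferentiableAt ℂ (fun v : ℂ => v⁻¹) v := differentiableAt_id.inv hv0
  have h1 : DifferentiableAt ℂ (fun v : ℂ => (1 : ℂ) + 2 * v) v :=
    (differentiableAt_const _).add ((differentiableAt_const _).mul differentiableAt_id)
  have h2 : DifferentiableAt ℂ (fun v : ℂ => Complex.exp (-v * (t : ℂ))) v :=
    (differentiableAt_id.neg.mul_const _).cexp
  have h3 : DifferentiableAt ℂ (fun v : ℂ => ((1 : ℂ) + v) ^ (z - 1)) v :=
    ((differentiableAt_const _).add differentiableAt_id).zpow (Or.inl hv1)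
  have h4 : DifferentiableAt ℂ (fun v : ℂ => (v * (1 + v)) ^ (-(k : ℤ))) v :=
    (differentiableAt_id.mul ((differentiableAt_const _).add differentiableAt_id)).zpow
      (Or.inl (mul_ne_zero hv0 hv1))
  exact (((h0.mul h1).mul h2).mul h3).mul h4

/-- Radius independence for the ψ-integrand. -/
lemma myPsiRadius (t : ℝ) (z j : ℤ) {r R : ℝ} (hr : r ∈ Set.Ioo (0:ℝ) 1)
    (hR : R ∈ Set.Ioo (0:ℝ) 1) :
    (∮ w in C(0, r), w ^ (-z - 1) * Complex.exp ((w - 1) * (t : ℂ)) * ((w - 1) * w) ^ j)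
      = ∮ w in C(0, R), w ^ (-z - 1) * Complex.exp ((w - 1) * (t : ℂ)) * ((w - 1) * w) ^ j := by
  have key : ∀ {a b : ℝ}, a ∈ Set.Ioo (0:ℝ) 1 → b ∈ Set.Ioo (0:ℝ) 1 → a ≤ b →
      (∮ w in C(0, b), w ^ (-z - 1) * Complex.exp ((w - 1) * (t : ℂ)) * ((w - 1) * w) ^ j)
        = ∮ w in C(0, a), w ^ (-z - 1) * Complex.exp ((w - 1) * (t : ℂ)) * ((w - 1) * w) ^ j := by
    intro a b ha hb hab
    apply circleIntegral_eq_of_differentiable_on_annulus_off_countable ha.1 hab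
      Set.countable_empty
    · intro w hw
      have hw0 : w ≠ 0 := by
        intro h; subst h
        simp only [Set.mem_diff, mem_closedBall, mem_ball, dist_self] at hw
        exact hw.2 (by linarith [ha.1])
      have hw1 : w ≠ 1 := by
        intro h; subst h
        have := hw.1
        simp only [mem_closedBall, dist_zero_right] at this
        rw [show ‖(1:ℂ)‖ = 1 by simp] at this
        linarith [hb.2]
      exact (myDiffPsi t z j hw0 hw1).continuousAt.continuousWithinAt
    · intro w hw
      have hw0 : w ≠ 0 := by
        intro h; subst h
        have := hw.1.2
        simp only [mem_closedBall, dist_self] at this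
        exact this (by linarith [ha.1])
      have hw1 : w ≠ 1 := by
        intro h; subst h
        have := hw.1.1
        simp only [mem_ball, dist_zero_right] at this
        rw [show ‖(1:ℂ)‖ = 1 by simp] at this
        linarith [hb.2]
      exact myDiffPsi t z j hw0 hw1
  rcases le_total r R with h | h
  · exact (key hr hR h).symm
  · exact key hR hr h

/-- Radius independence for the φ-integrand. -/
lemma myPhiRadius (t : ℝ) (z : ℤ) (k : ℕ) {r R : ℝ} (hr : r ∈ Set.Ioo (0:ℝ) 1)
    (hR : R ∈ Set.Ioo (0:ℝ) 1) :
    (∮ v in C(0, r), v⁻¹ * (1 + 2 * v) * Complex.exp (-v * (t : ℂ)) * (1 + v) ^ (z - 1) *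
        (v * (1 + v)) ^ (-(k : ℤ)))
      = ∮ v in C(0, R), v⁻¹ * (1 + 2 * v) * Complex.exp (-v * (t : ℂ)) * (1 + v) ^ (z - 1) *
        (v * (1 + v)) ^ (-(k : ℤ)) := by
  have key : ∀ {a b : ℝ}, a ∈ Set.Ioo (0:ℝ) 1 → b ∈ Set.Ioo (0:ℝ) 1 → a ≤ b →
      (∮ v in C(0, b), v⁻¹ * (1 + 2 * v) * Complex.exp (-v * (t : ℂ)) * (1 + v) ^ (z - 1) *
          (v * (1 + v)) ^ (-(k : ℤ)))
        = ∮ v in C(0, a), v⁻¹ * (1 + 2 * v) * Complex.exp (-v * (t : ℂ)) * (1 + v) ^ (z - 1) *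
          (v * (1 + v)) ^ (-(k : ℤ)) := by
    intro a b ha hb hab
    have hnz : ∀ {v : ℂ}, v ∈ closedBall (0:ℂ) b → ((1:ℂ) + v) ≠ 0 := by
      intro v hv h
      have : ‖v‖ ≤ b := by simpa [dist_zero_right] using hv
      have h1 : v = -1 := by linear_combination h
      rw [h1] at this; simp at this; linarith [hb.2]
    apply circleIntegral_eq_of_differentiable_on_annulus_off_countable ha.1 hab
      Set.countable_empty
    · intro v hv
      have hv0 : v ≠ 0 := by
        intro h; subst h
        simp only [Set.mem_diff, mem_closedBall, mem_ball, dist_self] at hv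
        exact hv.2 (by linarith [ha.1])
      exact (myDiffPhi t z k hv0 (hnz hv.1)).continuousAt.continuousWithinAt
    · intro v hv
      have hv0 : v ≠ 0 := by
        intro h; subst h
        have := hv.1.2
        simp only [mem_closedBall, dist_self] at this
        exact this (by linarith [ha.1])
      exact myDiffPhi t z k hv0 (hnz (ball_subset_closedBall hv.1.1))
  rcases le_total r R with h | h
  · exact (key hr hR h).symm
  · exact key hR hr h



lemma myPointwise (t : ℝ) (z1 z2 : ℤ) (n1 n2 : ℕ) {v w : ℂ}
    (hv0 : v ≠ 0) (hv1 : (1 : ℂ) + v ≠ 0) (hw0 : w ≠ 0) (hw1 : w ≠ 1)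
    (hab : (w - 1) * w ≠ v * (1 + v)) :
    ∑ k ∈ Finset.range n2,
      (w ^ (-z1 - 1) * Complex.exp ((w - 1) * (t : ℂ)) *
          ((w - 1) * w) ^ ((n1 : ℤ) - (n2 : ℤ) + (k : ℤ))) *
        (v⁻¹ * (1 + 2 * v) * Complex.exp (-v * (t : ℂ)) * (1 + v) ^ (z2 - 1) *
          (v * (1 + v)) ^ (-(k : ℤ)))
      = ((1 + 2 * v) * (1 + v) ^ z2 * Complex.exp (-v * (t : ℂ)) *
            (v * (1 + v)) ^ (-(n2 : ℤ))) *
          (Complex.exp ((w - 1) * (t : ℂ)) * ((w - 1) * w) ^ n1 * w ^ (-z1 - 1) *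
            ((w - 1) * w - v * (1 + v))⁻¹)
        - ((1 + 2 * v) * (1 + v) ^ z2 * Complex.exp (-v * (t : ℂ))) *
          (Complex.exp ((w - 1) * (t : ℂ)) * ((w - 1) * w) ^ ((n1 : ℤ) - (n2 : ℤ)) *
            w ^ (-z1 - 1) * ((w - 1) * w - v * (1 + v))⁻¹) := by
  have ha : (w - 1) * w ≠ 0 := mul_ne_zero (sub_ne_zero.mpr hw1) hw0
  have hb : v * (1 + v) ≠ 0 := mul_ne_zero hv0 hv1
  have step1 : ∑ k ∈ Finset.range n2,
      (w ^ (-z1 - 1) * Complex.exp ((w - 1) * (t : ℂ)) *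
          ((w - 1) * w) ^ ((n1 : ℤ) - (n2 : ℤ) + (k : ℤ))) *
        (v⁻¹ * (1 + 2 * v) * Complex.exp (-v * (t : ℂ)) * (1 + v) ^ (z2 - 1) *
          (v * (1 + v)) ^ (-(k : ℤ)))
      = (w ^ (-z1 - 1) * Complex.exp ((w - 1) * (t : ℂ)) *
          (v⁻¹ * (1 + 2 * v) * Complex.exp (-v * (t : ℂ)) * (1 + v) ^ (z2 - 1))) *
        ∑ k ∈ Finset.range n2,
          ((w - 1) * w) ^ ((n1 : ℤ) - (n2 : ℤ) + (k : ℤ)) * (v * (1 + v)) ^ (-(k : ℤ)) := by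
    rw [Finset.mul_sum]
    exact Finset.sum_congr rfl fun k _ => by ring
  rw [step1, myKeySum _ _ ha hb hab n1 n2]
  have e1 : (v * (1 + v)) ^ ((1 : ℤ) - (n2 : ℤ))
      = v * (1 + v) * (v * (1 + v)) ^ (-(n2 : ℤ)) := by
    rw [show (1 : ℤ) - (n2 : ℤ) = 1 + -(n2 : ℤ) by ring, zpow_add₀ hb, zpow_one]
  have e2 : ((1 : ℂ) + v) ^ z2 = (1 + v) ^ (z2 - 1) * (1 + v) := by
    rw [zpow_sub_one₀ hv1]; field_simp
  have e3 : ((w - 1) * w) ^ ((n1 : ℕ) : ℤ) = ((w - 1) * w) ^ (n1 : ℕ) := zpow_natCast _ _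
  rw [e1, e2, e3]
  linear_combination (w ^ (-z1 - 1) * Complex.exp ((w - 1) * (t : ℂ)) * (1 + 2 * v) *
      Complex.exp (-v * (t : ℂ)) * (1 + v) ^ (z2 - 1) * (1 + v) *
      (((w - 1) * w) ^ n1 * (v * (1 + v)) ^ (-(n2 : ℤ)) - ((w - 1) * w) ^ ((n1 : ℤ) - (n2 : ℤ))) *
      ((w - 1) * w - v * (1 + v))⁻¹) * (inv_mul_cancel₀ hv0)


noncomputable def myF1 (t : ℝ) (z1 z2 : ℤ) (n1 n2 : ℕ) (v w : ℂ) : ℂ :=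
  ((1 + 2 * v) * (1 + v) ^ z2 * Complex.exp (-v * (t : ℂ)) * (v * (1 + v)) ^ (-(n2 : ℤ))) *
    (Complex.exp ((w - 1) * (t : ℂ)) * ((w - 1) * w) ^ n1 * w ^ (-z1 - 1) *
      ((w - 1) * w - v * (1 + v))⁻¹)

noncomputable def myF2 (t : ℝ) (z1 z2 : ℤ) (n1 n2 : ℕ) (v w : ℂ) : ℂ :=
  ((1 + 2 * v) * (1 + v) ^ z2 * Complex.exp (-v * (t : ℂ))) *
    (Complex.exp ((w - 1) * (t : ℂ)) * ((w - 1) * w) ^ ((n1 : ℤ) - (n2 : ℤ)) * w ^ (-z1 - 1) *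
      ((w - 1) * w - v * (1 + v))⁻¹)

lemma myNeZero {ρ : ℝ} (hρ' : ρ * (1 + ρ) < 1 / 4) {v w : ℂ}
    (hv : ‖v‖ ≤ ρ) (hw : ‖w‖ = 1 / 2) : (w - 1) * w - v * (1 + v) ≠ 0 := by
  have hρ0 : 0 ≤ ρ := le_trans (norm_nonneg v) hv
  have h1 : ‖v * (1 + v)‖ ≤ ρ * (1 + ρ) := by
    rw [norm_mul]
    have h1v : ‖(1 : ℂ) + v‖ ≤ 1 + ρ := by
      calc ‖(1 : ℂ) + v‖ ≤ ‖(1 : ℂ)‖ + ‖v‖ := norm_add_le _ _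
      _ ≤ 1 + ρ := by rw [norm_one]; linarith
    exact mul_le_mul hv h1v (norm_nonneg _) hρ0
  have h2 : (1 : ℝ) / 4 ≤ ‖(w - 1) * w‖ := by
    rw [norm_mul, hw]
    have : (1 : ℝ) / 2 ≤ ‖w - 1‖ := by
      have := norm_sub_norm_le (1 : ℂ) w
      rw [norm_one, hw, norm_sub_rev] at this
      linarith
    nlinarith
  intro h
  rw [sub_eq_zero] at h
  rw [h] at h2
  linarith

lemma myDiffF1v (t : ℝ) (z1 z2 : ℤ) (n1 n2 : ℕ) {v w : ℂ}
    (hv0 : v ≠ 0) (hv1 : (1 : ℂ) + v ≠ 0) (hd : (w - 1) * w - v * (1 + v) ≠ 0) :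
    DifferentiableAt ℂ (fun v => myF1 t z1 z2 n1 n2 v w) v := by
  unfold myF1
  apply DifferentiableAt.mul
  · apply DifferentiableAt.mul
    · apply DifferentiableAt.mul
      · exact ((differentiableAt_const _).add ((differentiableAt_const _).mul
          differentiableAt_id)).mul
          (((differentiableAt_const _).add differentiableAt_id).zpow (Or.inl hv1))
      · exact (differentiableAt_id.neg.mul_const _).cexp
    · exact (differentiableAt_id.mul ((differentiableAt_const _).add
        differentiableAt_id)).zpow (Or.inl (mul_ne_zero hv0 hv1))
  · apply DifferentiableAt.const_mul
    exact ((differentiableAt_const _).sub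
      (differentiableAt_id.mul ((differentiableAt_const _).add differentiableAt_id))).inv hd

lemma myDiffF2v (t : ℝ) (z1 z2 : ℤ) (n1 n2 : ℕ) {v w : ℂ}
    (hv1 : (1 : ℂ) + v ≠ 0) (hd : (w - 1) * w - v * (1 + v) ≠ 0) :
    DifferentiableAt ℂ (fun v => myF2 t z1 z2 n1 n2 v w) v := by
  unfold myF2
  apply DifferentiableAt.mul
  · apply DifferentiableAt.mul
    · exact ((differentiableAt_const _).add ((differentiableAt_const _).mul
        differentiableAt_id)).mul
        (((differentiableAt_const _).add differentiableAt_id).zpow (Or.inl hv1))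
    · exact (differentiableAt_id.neg.mul_const _).cexp
  · apply DifferentiableAt.const_mul
    exact ((differentiableAt_const _).sub
      (differentiableAt_id.mul ((differentiableAt_const _).add differentiableAt_id))).inv hd

/-- Vanishing of the `v`-integral of `myF2` (Cauchy-Goursat). -/
lemma myCauchyZero (t : ℝ) (z1 z2 : ℤ) (n1 n2 : ℕ) {ρ : ℝ} (hρ : ρ ∈ Set.Ioo (0:ℝ) 1)
    (hρ' : ρ * (1 + ρ) < 1 / 4) {w : ℂ} (hw : ‖w‖ = 1 / 2) :
    (∮ v in C(0, ρ), myF2 t z1 z2 n1 n2 v w) = 0 := by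
  have key : ∀ v : ℂ, v ∈ closedBall (0:ℂ) ρ →
      DifferentiableAt ℂ (fun v => myF2 t z1 z2 n1 n2 v w) v := by
    intro v hv
    rw [mem_closedBall, dist_zero_right] at hv
    have hv1 : (1 : ℂ) + v ≠ 0 := by
      intro h
      have : v = -1 := by linear_combination h
      rw [this] at hv; simp at hv; linarith [hρ.2]
    exact myDiffF2v t z1 z2 n1 n2 hv1 (myNeZero hρ' hv hw)
  exact Complex.circleIntegral_eq_zero_of_differentiable_on_off_countable hρ.1.le
    Set.countable_empty
    (fun v hv => (key v hv).continuousAt.continuousWithinAt)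
    (fun v hv => key v (ball_subset_closedBall hv.1))

/-- Joint continuity of `myF1` (in the order (v, w)). -/
lemma myContF1 (t : ℝ) (z1 z2 : ℤ) (n1 n2 : ℕ) {ρ : ℝ} (hρ : ρ ∈ Set.Ioo (0:ℝ) 1)
    (hρ' : ρ * (1 + ρ) < 1 / 4) :
    ContinuousOn (fun p : ℂ × ℂ => myF1 t z1 z2 n1 n2 p.1 p.2)
      (sphere (0:ℂ) ρ ×ˢ sphere (0:ℂ) (1/2)) := by
  rintro ⟨v, w⟩ ⟨hv, hw⟩
  rw [mem_sphere_zero_iff_norm] at hv hw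
  have hv0 : v ≠ 0 := by intro h; rw [h] at hv; simp at hv; linarith [hρ.1]
  have hv1 : (1 : ℂ) + v ≠ 0 := by
    intro h
    have : v = -1 := by linear_combination h
    rw [this] at hv; simp at hv; linarith [hρ.2]
  have hw0 : w ≠ 0 := by intro h; rw [h] at hw; norm_num at hw
  have hd : (w - 1) * w - v * (1 + v) ≠ 0 := myNeZero hρ' hv.le hw
  apply ContinuousAt.continuousWithinAt
  unfold myF1
  have hcv : ContinuousAt (fun p : ℂ × ℂ => p.1) (v, w) := continuous_fst.continuousAt
  have hcw : ContinuousAt (fun p : ℂ × ℂ => p.2) (v, w) := continuous_snd.continuousAt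
  refine ContinuousAt.mul ?_ ?_
  · refine ((((continuousAt_const.add (continuousAt_const.mul hcv)).mul
      ((continuousAt_const.add hcv).zpow₀ _ (Or.inl hv1))).mul ?_).mul
      ((hcv.mul (continuousAt_const.add hcv)).zpow₀ _ (Or.inl (mul_ne_zero hv0 hv1))))
    exact (hcv.neg.mul continuousAt_const).cexp
  · have hden : ContinuousAt (fun p : ℂ × ℂ => ((p.2 - 1) * p.2 - p.1 * (1 + p.1))⁻¹) (v, w) :=
      ContinuousAt.inv₀ (((hcw.sub continuousAt_const).mul hcw).sub
        (hcv.mul (continuousAt_const.add hcv))) hd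
    exact ((((hcw.sub continuousAt_const).mul continuousAt_const).cexp.mul
      (((hcw.sub continuousAt_const).mul hcw).pow n1)).mul (hcw.zpow₀ _ (Or.inl hw0))).mul hden

/-- Joint continuity of `myF2` (in the order (v, w)). -/
lemma myContF2 (t : ℝ) (z1 z2 : ℤ) (n1 n2 : ℕ) {ρ : ℝ} (hρ : ρ ∈ Set.Ioo (0:ℝ) 1)
    (hρ' : ρ * (1 + ρ) < 1 / 4) :
    ContinuousOn (fun p : ℂ × ℂ => myF2 t z1 z2 n1 n2 p.1 p.2)
      (sphere (0:ℂ) ρ ×ˢ sphere (0:ℂ) (1/2)) := by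
  rintro ⟨v, w⟩ ⟨hv, hw⟩
  rw [mem_sphere_zero_iff_norm] at hv hw
  have hv1 : (1 : ℂ) + v ≠ 0 := by
    intro h
    have : v = -1 := by linear_combination h
    rw [this] at hv; simp at hv; linarith [hρ.2]
  have hw0 : w ≠ 0 := by intro h; rw [h] at hw; norm_num at hw
  have hw1 : w ≠ 1 := by intro h; rw [h] at hw; norm_num at hw
  have hd : (w - 1) * w - v * (1 + v) ≠ 0 := myNeZero hρ' hv.le hw
  apply ContinuousAt.continuousWithinAt
  unfold myF2
  have hcv : ContinuousAt (fun p : ℂ × ℂ => p.1) (v, w) := continuous_fst.continuousAt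
  have hcw : ContinuousAt (fun p : ℂ × ℂ => p.2) (v, w) := continuous_snd.continuousAt
  refine ContinuousAt.mul ?_ ?_
  · exact ((continuousAt_const.add (continuousAt_const.mul hcv)).mul
      ((continuousAt_const.add hcv).zpow₀ _ (Or.inl hv1))).mul
      ((hcv.neg.mul continuousAt_const).cexp)
  · have hden : ContinuousAt (fun p : ℂ × ℂ => ((p.2 - 1) * p.2 - p.1 * (1 + p.1))⁻¹) (v, w) :=
      ContinuousAt.inv₀ (((hcw.sub continuousAt_const).mul hcw).sub
        (hcv.mul (continuousAt_const.add hcv))) hd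
    exact ((((hcw.sub continuousAt_const).mul continuousAt_const).cexp.mul
      (((hcw.sub continuousAt_const).mul hcw).zpow₀ _
        (Or.inl (mul_ne_zero (sub_ne_zero.mpr hw1) hw0)))).mul
      (hcw.zpow₀ _ (Or.inl hw0))).mul hden

/-- For `t > 0`, `N ≥ 1`, `n1, n2 ≥ 1`, integers `z1, z2`, and `ρ ∈ (0,1)` small enough
that `ρ(1+ρ) < 1/4`,
`∑_{k=0}^{n2-1} ψ_{n1-n2+k}(z1) φ_k(z2)
 = ((-1)^{n1-n2}/(2πi)²) ∮_{|v|=ρ} dv (1+2v)(1+v)^{z2} e^{-vt} (v(1+v))^{-n2}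
     ∮_{|1+u|=1/2} du e^{ut} (u(1+u))^{n1} (1+u)^{-z1-1} (u(1+u) - v(1+v))^{-1}`,
the inner contour being the positively oriented circle of radius `1/2` centered at
`u = -1` (on which `|u(1+u)| ≥ 1/4 > |v(1+v)|`), and the outer contour the positively
oriented circle of radius `ρ` centered at the origin. -/
theorem statement2 (t : ℝ) (ht : 0 < t) (N : ℕ) (hN : 1 ≤ N)
    (n1 n2 : ℕ) (hn1 : 1 ≤ n1) (hn2 : 1 ≤ n2) (z1 z2 : ℤ)
    (r r' ρ : ℝ) (hr : r ∈ Set.Ioo (0 : ℝ) 1) (hr' : r' ∈ Set.Ioo (0 : ℝ) 1)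
    (hρ : ρ ∈ Set.Ioo (0 : ℝ) 1) (hρ' : ρ * (1 + ρ) < 1 / 4) :
    ∑ k ∈ Finset.range n2, psi t r ((n1 : ℤ) - (n2 : ℤ) + k) z1 * phi t r' k z2 =
      ((-1 : ℂ) ^ ((n1 : ℤ) - (n2 : ℤ)) / (2 * ↑Real.pi * Complex.I) ^ 2) *
        ∮ v in C(0, ρ), (1 + 2 * v) * (1 + v) ^ z2 * Complex.exp (-v * ↑t) *
          (v * (1 + v)) ^ (-(n2 : ℤ)) *
            ∮ u in C(-1, 1 / 2), Complex.exp (u * ↑t) * (u * (1 + u)) ^ n1 *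
              (1 + u) ^ (-z1 - 1) * (u * (1 + u) - v * (1 + v))⁻¹ := by
  have h2 : (1/2 : ℝ) ∈ Set.Ioo (0:ℝ) 1 := by norm_num
  set P : ℂ := 2 * (Real.pi : ℂ) * Complex.I with hP
  set m : ℤ := (n1 : ℤ) - (n2 : ℤ) with hm
  set Fw : ℤ → ℂ → ℂ :=
    fun j w => w ^ (-z1 - 1) * Complex.exp ((w - 1) * (t:ℂ)) * ((w - 1) * w) ^ j with hFw
  set Gv : ℕ → ℂ → ℂ := fun k v => v⁻¹ * (1 + 2*v) * Complex.exp (-v*(t:ℂ)) * (1+v)^(z2-1) *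
    (v*(1+v))^(-(k:ℤ)) with hGv
  set Iw : ℤ → ℂ := fun j => ∮ w in C(0, 1/2), Fw j w with hIw
  set Jv : ℕ → ℂ := fun k => ∮ v in C(0, ρ), Gv k v with hJv
  -- continuity of the basic integrands
  have hGvCont : ∀ k : ℕ, ContinuousOn (Gv k) (sphere (0:ℂ) ρ) := by
    intro k v hv
    rw [mem_sphere_zero_iff_norm] at hv
    have hv0 : v ≠ 0 := by intro h; rw [h] at hv; simp at hv; linarith [hρ.1]
    have hv1 : (1 : ℂ) + v ≠ 0 := by
      intro h
      have : v = -1 := by linear_combination h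
      rw [this] at hv; simp at hv; linarith [hρ.2]
    exact (myDiffPhi t z2 k hv0 hv1).continuousAt.continuousWithinAt
  have hFwCont : ∀ j : ℤ, ContinuousOn (Fw j) (sphere (0:ℂ) (1/2)) := by
    intro j w hw
    rw [mem_sphere_zero_iff_norm] at hw
    have hw0 : w ≠ 0 := by intro h; rw [h] at hw; norm_num at hw
    have hw1 : w ≠ 1 := by intro h; rw [h] at hw; norm_num at hw
    exact (myDiffPsi t z1 j hw0 hw1).continuousAt.continuousWithinAt
  -- Step 1: the summands
  have hpsi : ∀ k : ℕ, psi t r (m + k) z1 = (-1:ℂ)^(m + (k:ℤ)) / P * Iw (m + k) := by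
    intro k
    rw [psi, myPsiRadius t z1 (m + (k:ℤ)) hr h2]
  have hphi : ∀ k : ℕ, phi t r' k z2 = (-1:ℂ)^(k:ℕ) / P * Jv k := by
    intro k
    rw [phi, myPhiRadius t z2 k hr' hρ]
  -- the key identity
  have key : ∑ k ∈ Finset.range n2, Iw (m + k) * Jv k
      = ∮ v in C(0,ρ), (1 + 2 * v) * (1 + v) ^ z2 * Complex.exp (-v * (t:ℂ)) *
          (v * (1 + v)) ^ (-(n2 : ℤ)) *
            ∮ u in C(-1, 1 / 2), Complex.exp (u * (t:ℂ)) * (u * (1 + u)) ^ n1 *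
              (1 + u) ^ (-z1 - 1) * (u * (1 + u) - v * (1 + v))⁻¹ := by
    have hcont12 : ContinuousOn
        (fun p : ℂ × ℂ => myF1 t z1 z2 n1 n2 p.1 p.2 - myF2 t z1 z2 n1 n2 p.1 p.2)
        (sphere (0:ℂ) ρ ×ˢ sphere (0:ℂ) (1/2)) :=
      (myContF1 t z1 z2 n1 n2 hρ hρ').sub (myContF2 t z1 z2 n1 n2 hρ hρ')
    have hcont1' : ContinuousOn (fun p : ℂ × ℂ => myF1 t z1 z2 n1 n2 p.2 p.1)
        (sphere (0:ℂ) (1/2) ×ˢ sphere (0:ℂ) ρ) := by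
      have := (myContF1 t z1 z2 n1 n2 hρ hρ').comp
        (continuous_swap.continuousOn (s := sphere (0:ℂ) (1/2) ×ˢ sphere (0:ℂ) ρ))
        (fun p hp => ⟨hp.2, hp.1⟩)
      exact this
    calc ∑ k ∈ Finset.range n2, Iw (m + k) * Jv k
        = ∑ k ∈ Finset.range n2, ∮ v in C(0,ρ), Iw (m + k) * Gv k v :=
          Finset.sum_congr rfl fun k _ => (circleIntegral.integral_const_mul _ _ _ _).symm
      _ = ∮ v in C(0,ρ), ∑ k ∈ Finset.range n2, Iw (m + k) * Gv k v :=
          (myCircleSum hρ.1.le 0 n2 (fun k v => Iw (m + k) * Gv k v)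
            (fun k _ => continuousOn_const.mul (hGvCont k))).symm
      _ = ∮ v in C(0,ρ), ∮ w in C(0,1/2), ∑ k ∈ Finset.range n2, Fw (m + k) w * Gv k v := by
          congr 1; funext v
          calc ∑ k ∈ Finset.range n2, Iw (m + k) * Gv k v
              = ∑ k ∈ Finset.range n2, ∮ w in C(0,1/2), Fw (m + k) w * Gv k v := by
                refine Finset.sum_congr rfl fun k _ => ?_
                have h := circleIntegral.integral_smul_const (Fw (m + k)) (Gv k v) 0 (1/2 : ℝ)
                simp only [smul_eq_mul] at h
                exact h.symm
            _ = ∮ w in C(0,1/2), ∑ k ∈ Finset.range n2, Fw (m + k) w * Gv k v :=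
                (myCircleSum (by norm_num) 0 n2 (fun k w => Fw (m + k) w * Gv k v)
                  (fun k _ => (hFwCont (m + k)).mul continuousOn_const)).symm
      _ = ∮ v in C(0,ρ), ∮ w in C(0,1/2),
            (myF1 t z1 z2 n1 n2 v w - myF2 t z1 z2 n1 n2 v w) := by
          refine circleIntegral.integral_congr hρ.1.le fun v hv => ?_
          rw [mem_sphere_zero_iff_norm] at hv
          have hv0 : v ≠ 0 := by intro h; rw [h] at hv; simp at hv; linarith [hρ.1]
          have hv1 : (1 : ℂ) + v ≠ 0 := by
            intro h
            have : v = -1 := by linear_combination h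
            rw [this] at hv; simp at hv; linarith [hρ.2]
          refine circleIntegral.integral_congr (by norm_num) fun w hw => ?_
          rw [mem_sphere_zero_iff_norm] at hw
          have hw0 : w ≠ 0 := by intro h; rw [h] at hw; norm_num at hw
          have hw1 : w ≠ 1 := by intro h; rw [h] at hw; norm_num at hw
          have hab : (w - 1) * w ≠ v * (1 + v) := by
            have := myNeZero hρ' hv.le hw
            intro h; exact this (by rw [h]; ring)
          exact myPointwise t z1 z2 n1 n2 hv0 hv1 hw0 hw1 hab
      _ = ∮ w in C(0,1/2), ∮ v in C(0,ρ),
            (myF1 t z1 z2 n1 n2 v w - myF2 t z1 z2 n1 n2 v w) :=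
          myCircleSwap hρ.1.le (by norm_num)
            (fun v w => myF1 t z1 z2 n1 n2 v w - myF2 t z1 z2 n1 n2 v w) hcont12
      _ = ∮ w in C(0,1/2), ∮ v in C(0,ρ), myF1 t z1 z2 n1 n2 v w := by
          refine circleIntegral.integral_congr (by norm_num) fun w hw => ?_
          rw [mem_sphere_zero_iff_norm] at hw
          have hInt1 : CircleIntegrable (fun v => myF1 t z1 z2 n1 n2 v w) 0 ρ := by
            refine ContinuousOn.circleIntegrable hρ.1.le fun v hv => ?_
            rw [mem_sphere_zero_iff_norm] at hv
            have hv0 : v ≠ 0 := by intro h; rw [h] at hv; simp at hv; linarith [hρ.1]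
            have hv1 : (1 : ℂ) + v ≠ 0 := by
              intro h
              have : v = -1 := by linear_combination h
              rw [this] at hv; simp at hv; linarith [hρ.2]
            exact (myDiffF1v t z1 z2 n1 n2 hv0 hv1
              (myNeZero hρ' hv.le hw)).continuousAt.continuousWithinAt
          have hInt2 : CircleIntegrable (fun v => myF2 t z1 z2 n1 n2 v w) 0 ρ := by
            refine ContinuousOn.circleIntegrable hρ.1.le fun v hv => ?_
            rw [mem_sphere_zero_iff_norm] at hv
            have hv1 : (1 : ℂ) + v ≠ 0 := by
              intro h
              have : v = -1 := by linear_combination h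
              rw [this] at hv; simp at hv; linarith [hρ.2]
            exact (myDiffF2v t z1 z2 n1 n2 hv1
              (myNeZero hρ' hv.le hw)).continuousAt.continuousWithinAt
          rw [circleIntegral.integral_sub hInt1 hInt2,
            myCauchyZero t z1 z2 n1 n2 hρ hρ' hw, sub_zero]
      _ = ∮ v in C(0,ρ), ∮ w in C(0,1/2), myF1 t z1 z2 n1 n2 v w :=
          myCircleSwap (by norm_num) hρ.1.le (fun w v => myF1 t z1 z2 n1 n2 v w) hcont1'
      _ = ∮ v in C(0,ρ), (1 + 2 * v) * (1 + v) ^ z2 * Complex.exp (-v * (t:ℂ)) *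
            (v * (1 + v)) ^ (-(n2 : ℤ)) *
              ∮ u in C(-1, 1 / 2), Complex.exp (u * (t:ℂ)) * (u * (1 + u)) ^ n1 *
                (1 + u) ^ (-z1 - 1) * (u * (1 + u) - v * (1 + v))⁻¹ := by
          congr 1; funext v
          have htrans : (∮ u in C(-1, 1/2), Complex.exp (u * (t:ℂ)) * (u * (1 + u)) ^ n1 *
                (1 + u) ^ (-z1 - 1) * (u * (1 + u) - v * (1 + v))⁻¹)
              = ∮ w in C(0, 1/2), Complex.exp ((w - 1) * (t:ℂ)) * ((w - 1) * w) ^ n1 *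
                w ^ (-z1 - 1) * ((w - 1) * w - v * (1 + v))⁻¹ := by
            have h := myCircleTranslate (fun u => Complex.exp (u * (t:ℂ)) * (u * (1 + u)) ^ n1 *
              (1 + u) ^ (-z1 - 1) * (u * (1 + u) - v * (1 + v))⁻¹) (-1) 0 (1/2)
            rw [show (-1:ℂ) + 0 = -1 by ring] at h
            rw [h]
            congr 1; funext w
            rw [show (1:ℂ) + (-1 + w) = w by ring, show (-1:ℂ) + w = w - 1 by ring]
          rw [htrans]
          show (∮ w in C(0,1/2), ((1 + 2 * v) * (1 + v) ^ z2 * Complex.exp (-v * (t:ℂ)) *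
              (v * (1 + v)) ^ (-(n2 : ℤ))) *
            (Complex.exp ((w - 1) * (t:ℂ)) * ((w - 1) * w) ^ n1 * w ^ (-z1 - 1) *
              ((w - 1) * w - v * (1 + v))⁻¹)) = _
          rw [circleIntegral.integral_const_mul]
  calc ∑ k ∈ Finset.range n2, psi t r (m + k) z1 * phi t r' k z2
      = ∑ k ∈ Finset.range n2, ((-1:ℂ)^(m + (k:ℤ)) / P * Iw (m + k)) *
          ((-1:ℂ)^(k:ℕ) / P * Jv k) := by
        exact Finset.sum_congr rfl fun k _ => by rw [hpsi k, hphi k]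
    _ = ∑ k ∈ Finset.range n2, (-1:ℂ)^m / P^2 * (Iw (m + k) * Jv k) := by
        refine Finset.sum_congr rfl fun k _ => ?_
        have h1 : ((-1:ℂ))^(m + (k:ℤ)) = (-1:ℂ)^m * (-1:ℂ)^(k:ℕ) := by
          rw [zpow_add₀ (by norm_num : (-1:ℂ) ≠ 0), zpow_natCast]
        have h2' : ((-1:ℂ))^(k:ℕ) * (-1:ℂ)^(k:ℕ) = 1 := by
          rw [← mul_pow]; norm_num
        rw [h1]
        calc (-1:ℂ)^m * (-1:ℂ)^(k:ℕ) / P * Iw (m + k) * ((-1:ℂ)^(k:ℕ) / P * Jv k)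
            = ((-1:ℂ)^(k:ℕ) * (-1:ℂ)^(k:ℕ)) * ((-1:ℂ)^m / P^2 * (Iw (m + k) * Jv k)) := by
              ring
          _ = (-1:ℂ)^m / P^2 * (Iw (m + k) * Jv k) := by rw [h2', one_mul]
    _ = (-1:ℂ)^m / P^2 * ∑ k ∈ Finset.range n2, Iw (m + k) * Jv k := by
        rw [Finset.mul_sum]
    _ = ((-1 : ℂ) ^ m / P ^ 2) *
        ∮ v in C(0, ρ), (1 + 2 * v) * (1 + v) ^ z2 * Complex.exp (-v * (t:ℂ)) *
          (v * (1 + v)) ^ (-(n2 : ℤ)) *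
            ∮ u in C(-1, 1 / 2), Complex.exp (u * (t:ℂ)) * (u * (1 + u)) ^ n1 *
              (1 + u) ^ (-z1 - 1) * (u * (1 + u) - v * (1 + v))⁻¹ := by rw [key]
end

section
/- Let t > 0 and let n ≥ 1. For all integers j, k with 0 ≤ j, k ≤ n−1, the series ∑_{z ∈ ℤ} ψ_k(z) · φ_j(z) converges absolutely and equals δ_{k,j} (1 if k = j and 0 otherwise). (Note that ψ_k(z) = 0 for z < 0, so the sum is effectively over z ≥ 0.) -/
open Complex Metric Set
open scoped ENNReal Real

theorem circleIntegral.hasSum_integral_of_norm_le {ι E : Type*} [Countable ι] [NormedAddCommGroup E]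
    [NormedSpace ℂ E] {F : ι → ℂ → E} {G : ℂ → E} {c : ℂ} {R : ℝ} {b : ι → ℝ}
    (hF : ∀ i, CircleIntegrable (F i) c R) (hb : Summable b)
    (hFb : ∀ i, ∀ z ∈ sphere c |R|, ‖F i z‖ ≤ b i)
    (hFG : ∀ z ∈ sphere c |R|, HasSum (fun i => F i z) (G z)) :
    HasSum (fun i => ∮ z in C(c, R), F i z) (∮ z in C(c, R), G z) := by
  refine intervalIntegral.hasSum_integral_of_dominated_convergence (fun i _ => |R| * b i)
    (fun i => ((circleIntegrable_iff R).1 (hF i)).def'.1) (fun i => ?_) ?_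
    intervalIntegrable_const ?_ <;> refine .of_forall fun θ _ => ?_
  · rw [norm_smul, deriv_circleMap, norm_mul, norm_circleMap_zero, norm_I, mul_one]
    exact mul_le_mul_of_nonneg_left (hFb i _ (circleMap_mem_sphere' c R θ)) (abs_nonneg R)
  · exact hb.mul_left _
  · exact (hFG _ (circleMap_mem_sphere' c R θ)).const_smul _

theorem circleIntegral.integral_deriv_mul_zpow_sub_one_eq_zero {f f' : ℂ → ℂ} {c : ℂ} {R : ℝ}
    {m : ℤ} (hm : m ≠ 0) (hf : ∀ z ∈ sphere c |R|, HasDerivAt f (f' z) z ∧ f z ≠ 0) :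
    (∮ z in C(c, R), f' z * f z ^ (m - 1)) = 0 := by
  refine circleIntegral.integral_eq_zero_of_hasDerivWithinAt' (f := fun z => (m : ℂ)⁻¹ * f z ^ m)
    fun z hz => ?_
  obtain ⟨hderiv, hfz⟩ := hf z hz
  have := ((hasDerivAt_zpow m _ (.inl hfz)).comp z hderiv).const_mul (m : ℂ)⁻¹
  refine (this.congr_deriv ?_).hasDerivWithinAt
  field_simp [(Int.cast_ne_zero.2 hm : (m : ℂ) ≠ 0)]

theorem one_add_ne_zero_of_norm_lt_one_s3 {v : ℂ} (hv : ‖v‖ < 1) : 1 + v ≠ 0 := fun h => by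
  simp [show v = -1 by linear_combination h] at hv

theorem ne_zero_and_one_add_ne_zero_of_mem_sphere {ρ : ℝ} (hρ : ρ ∈ Ioo 0 1) {v : ℂ}
    (hv : v ∈ sphere (0 : ℂ) ρ) : v ≠ 0 ∧ 1 + v ≠ 0 :=
  ⟨ne_of_mem_sphere hv hρ.1.ne',
    one_add_ne_zero_of_norm_lt_one_s3 (mem_sphere_zero_iff_norm.1 hv ▸ hρ.2)⟩

theorem circleIntegral_one_add_two_mul_mul_zpow {ρ : ℝ} (hρ : ρ ∈ Ioo 0 1) (m : ℤ) :
    (∮ v in C(0, ρ), (1 + 2 * v) * (v * (1 + v)) ^ (m - 1)) =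
      if m = 0 then 2 * π * I else 0 := by
  split_ifs with hm
  · subst hm
    have hsplit : ∀ v ∈ sphere (0 : ℂ) ρ,
        (1 + 2 * v) * (v * (1 + v)) ^ ((0 : ℤ) - 1) = v⁻¹ + (1 + v)⁻¹ := fun v hv => by
      obtain ⟨hv0, hv1⟩ := ne_zero_and_one_add_ne_zero_of_mem_sphere hρ hv
      rw [zero_sub, zpow_neg_one]
      field_simp
      ring
    have hcont : ContinuousOn (fun v : ℂ => (1 + v)⁻¹) (closedBall 0 ρ) := fun v hv =>
      ((continuousAt_const.add continuousAt_id).inv₀ (one_add_ne_zero_of_norm_lt_one_s3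
        (by simpa using (mem_closedBall_zero_iff.1 hv).trans_lt hρ.2))).continuousWithinAt
    rw [circleIntegral.integral_congr hρ.1.le hsplit, circleIntegral.integral_add,
      circleIntegral_eq_zero_of_differentiable_on_off_countable hρ.1.le countable_empty hcont
        fun v hv => ?_]
    · simpa using circleIntegral.integral_sub_center_inv 0 hρ.1.ne'
    · exact (differentiableAt_const 1 |>.add differentiableAt_id).inv
        (one_add_ne_zero_of_norm_lt_one_s3 (by simpa using (mem_ball_zero_iff.1 hv.1).trans hρ.2))
    · exact ContinuousOn.circleIntegrable hρ.1.le
        (continuousOn_inv₀.mono fun v hv => ne_of_mem_sphere hv hρ.1.ne')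
    · exact ContinuousOn.circleIntegrable hρ.1.le (hcont.mono sphere_subset_closedBall)
  · exact circleIntegral.integral_deriv_mul_zpow_sub_one_eq_zero hm fun v hv => by
      rw [abs_of_pos hρ.1] at hv
      obtain ⟨hv0, hv1⟩ := ne_zero_and_one_add_ne_zero_of_mem_sphere hρ hv
      exact ⟨((hasDerivAt_id v).mul ((hasDerivAt_id v).const_add 1)).congr_deriv (by simp; ring),
        mul_ne_zero hv0 hv1⟩

noncomputable def psiGeneratingFunction (t : ℝ) (k : ℕ) (w : ℂ) : ℂ :=
  (-1) ^ k * exp ((w - 1) * t) * ((w - 1) * w) ^ k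

theorem differentiable_psiGeneratingFunction (t : ℝ) (k : ℕ) :
    Differentiable ℂ (psiGeneratingFunction t k) := by
  unfold psiGeneratingFunction
  fun_prop

theorem psi_natCast_eq_coeff (t r : ℝ) (k n : ℕ) :
    psi t r k n = (cauchyPowerSeries (psiGeneratingFunction t k) 0 r).coeff n := by
  have hintegrand : ∀ w : ℂ, (1 / (w - 0)) ^ n • (w - 0)⁻¹ • psiGeneratingFunction t k w =
      (-1) ^ k * (w ^ (-(n : ℤ) - 1) * exp ((w - 1) * t) * ((w - 1) * w) ^ (k : ℤ)) := by
    intro w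
    rw [show -(n : ℤ) - 1 = -((n + 1 : ℕ) : ℤ) by push_cast; ring, zpow_neg, zpow_natCast,
      zpow_natCast, psiGeneratingFunction]
    simp only [sub_zero, smul_eq_mul, one_div, inv_pow, pow_succ, mul_inv]
    ring
  show _ = cauchyPowerSeries _ 0 r n fun _ => 1
  simp only [cauchyPowerSeries_apply, hintegrand]
  rw [circleIntegral.integral_const_mul, psi, smul_eq_mul, zpow_natCast]
  ring

theorem psi_of_neg (t : ℝ) {r : ℝ} (hr : 0 ≤ r) (k : ℕ) {z : ℤ} (hz : z < 0) :
    psi t r k z = 0 := by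
  have hdiff : Differentiable ℂ fun w : ℂ =>
      w ^ (-z - 1) * exp ((w - 1) * t) * ((w - 1) * w) ^ (k : ℤ) := by
    simp only [zpow_natCast]
    exact ((differentiable_id.zpow (Or.inr (by omega))).mul (by fun_prop)).mul (by fun_prop)
  rw [psi, hdiff.diffContOnCl.circleIntegral_eq_zero hr, mul_zero]

theorem hasFPowerSeriesOnBall_psiGeneratingFunction (t : ℝ) {r : ℝ} (hr : 0 < r) (k : ℕ) :
    HasFPowerSeriesOnBall (psiGeneratingFunction t k)
      (cauchyPowerSeries (psiGeneratingFunction t k) 0 r) 0 ∞ :=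
  (differentiable_psiGeneratingFunction t k).hasFPowerSeriesOnBall 0 (R := ⟨r, hr.le⟩) hr

theorem hasSum_psi_mul_pow (t : ℝ) {r : ℝ} (hr : 0 < r) (k : ℕ) (u : ℂ) :
    HasSum (fun n : ℕ => psi t r k n * u ^ n) (psiGeneratingFunction t k u) := by
  simpa [psi_natCast_eq_coeff, FormalMultilinearSeries.apply_eq_pow_smul_coeff, mul_comm] using
    (hasFPowerSeriesOnBall_psiGeneratingFunction t hr k).hasSum (y := u) (by simp)

theorem summable_norm_psi_mul_pow (t : ℝ) {r : ℝ} (hr : 0 < r) (k : ℕ) (u : ℂ) :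
    Summable fun n : ℕ => ‖psi t r k n * u ^ n‖ := by
  simpa [psi_natCast_eq_coeff, FormalMultilinearSeries.norm_apply_eq_norm_coef] using
    FormalMultilinearSeries.summable_norm_mul_pow _ (r := ‖u‖₊)
      ((hasFPowerSeriesOnBall_psiGeneratingFunction t hr k).r_le.trans_lt' ENNReal.coe_lt_top)

noncomputable def phiIntegrand (t : ℝ) (j : ℕ) (z : ℤ) (v : ℂ) : ℂ :=
  v⁻¹ * (1 + 2 * v) * exp (-v * t) * (1 + v) ^ (z - 1) * (v * (1 + v)) ^ (-(j : ℤ))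

theorem phi_eq_circleIntegral (t ρ : ℝ) (j : ℕ) (z : ℤ) :
    phi t ρ j z = (-1) ^ j / (2 * π * I) * ∮ v in C(0, ρ), phiIntegrand t j z v :=
  rfl

theorem phiIntegrand_natCast (t : ℝ) (j n : ℕ) {v : ℂ} (hv : 1 + v ≠ 0) :
    phiIntegrand t j n v = (1 + v) ^ n * phiIntegrand t j 0 v := by
  simp only [phiIntegrand, zpow_sub₀ hv, zpow_natCast, zpow_zero]
  ring

theorem continuousOn_phiIntegrand (t : ℝ) {ρ : ℝ} (hρ : ρ ∈ Ioo 0 1) (j : ℕ) (z : ℤ) :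
    ContinuousOn (phiIntegrand t j z) (sphere 0 ρ) := fun v hv => by
  obtain ⟨hv0, hv1⟩ := ne_zero_and_one_add_ne_zero_of_mem_sphere hρ hv
  have hv01 : v * (1 + v) ≠ 0 := mul_ne_zero hv0 hv1
  unfold phiIntegrand
  exact ContinuousAt.continuousWithinAt (by fun_prop (disch := simp [*]))

theorem psiGeneratingFunction_one_add_mul_phiIntegrand (t : ℝ) (k j : ℕ) {v : ℂ} (hv0 : v ≠ 0)
    (hv1 : 1 + v ≠ 0) :
    psiGeneratingFunction t k (1 + v) * phiIntegrand t j 0 v =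
      (-1) ^ k * ((1 + 2 * v) * (v * (1 + v)) ^ ((k : ℤ) - j - 1)) := by
  simp only [psiGeneratingFunction, phiIntegrand, add_sub_cancel_left, zero_sub, zpow_neg,
    zpow_sub₀ (mul_ne_zero hv0 hv1), zpow_natCast, zpow_one, neg_mul, Complex.exp_neg]
  field_simp

theorem hasSum_psi_mul_phiIntegrand (t : ℝ) {r : ℝ} (hr : 0 < r) (k j : ℕ) {v : ℂ}
    (hv0 : v ≠ 0) (hv1 : 1 + v ≠ 0) :
    HasSum (fun n : ℕ => psi t r k n * phiIntegrand t j n v)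
      ((-1) ^ k * ((1 + 2 * v) * (v * (1 + v)) ^ ((k : ℤ) - j - 1))) := by
  rw [← psiGeneratingFunction_one_add_mul_phiIntegrand t k j hv0 hv1]
  refine ((hasSum_psi_mul_pow t hr k (1 + v)).mul_right _).congr_fun fun n => ?_
  rw [phiIntegrand_natCast t j n hv1, mul_assoc]

theorem norm_psi_mul_phiIntegrand_le (t r : ℝ) {ρ : ℝ} (hρ : ρ ∈ Ioo 0 1) (k j : ℕ) {M : ℝ}
    (hM : ∀ v ∈ sphere (0 : ℂ) ρ, ‖phiIntegrand t j 0 v‖ ≤ M) (n : ℕ) {v : ℂ}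
    (hv : v ∈ sphere (0 : ℂ) ρ) :
    ‖psi t r k n * phiIntegrand t j n v‖ ≤ ‖psi t r k n * ((1 + ρ : ℝ) : ℂ) ^ n‖ * M := by
  have hnorm : ‖1 + v‖ ≤ 1 + ρ :=
    (norm_add_le _ _).trans (by simp [mem_sphere_zero_iff_norm.1 hv])
  rw [phiIntegrand_natCast t j n (ne_zero_and_one_add_ne_zero_of_mem_sphere hρ hv).2]
  simp only [norm_mul, norm_pow, Complex.norm_of_nonneg (by linarith [hρ.1] : 0 ≤ 1 + ρ)]
  rw [← mul_assoc]
  have := hρ.1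
  gcongr
  exact hM v hv

theorem hasSum_psi_mul_phi_natCast (t : ℝ) {r ρ : ℝ} (hr : 0 < r) (hρ : ρ ∈ Ioo 0 1)
    (k j : ℕ) :
    HasSum (fun n : ℕ => psi t r k n * phi t ρ j n) (if k = j then 1 else 0) := by
  have hsphere : sphere (0 : ℂ) |ρ| = sphere 0 ρ := by rw [abs_of_pos hρ.1]
  obtain ⟨M, hM⟩ := (isCompact_sphere (0 : ℂ) ρ).exists_bound_of_continuousOn
    (continuousOn_phiIntegrand t hρ j 0)
  have hswap := circleIntegral.hasSum_integral_of_norm_le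
    (F := fun (n : ℕ) v => psi t r k n * phiIntegrand t j n v)
    (fun n => (ContinuousOn.circleIntegrable hρ.1.le
      (continuousOn_const.mul (continuousOn_phiIntegrand t hρ j n))))
    ((summable_norm_psi_mul_pow t hr k _).mul_right M)
    (fun n v hv => norm_psi_mul_phiIntegrand_le t r hρ k j hM n (hsphere ▸ hv))
    (fun v hv => by
      obtain ⟨hv0, hv1⟩ := ne_zero_and_one_add_ne_zero_of_mem_sphere hρ (hsphere ▸ hv)
      exact hasSum_psi_mul_phiIntegrand t hr k j hv0 hv1)
  rw [circleIntegral.integral_const_mul, circleIntegral_one_add_two_mul_mul_zpow hρ] at hswap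
  have hvalue : (-1) ^ j / (2 * π * I) * ((-1) ^ k * if (k : ℤ) - j = 0 then 2 * π * I else 0) =
      if k = j then 1 else 0 := by
    have h2πI : 2 * π * I ≠ 0 := by simp [Real.pi_ne_zero]
    rcases eq_or_ne k j with rfl | hkj
    · rw [sub_self, if_pos rfl, if_pos rfl]
      field_simp
      rw [← pow_mul, pow_mul', neg_one_sq, one_pow]
    · simp [hkj, sub_eq_zero]
  rw [← hvalue]
  refine (hswap.mul_left _).congr_fun fun n => ?_
  rw [phi_eq_circleIntegral, circleIntegral.integral_const_mul]
  ring

theorem statement3_general (t : ℝ) (j k : ℕ) (r r' : ℝ)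
    (hr : r ∈ Set.Ioo (0 : ℝ) 1) (hr' : r' ∈ Set.Ioo (0 : ℝ) 1) :
    Summable (fun z : ℤ => psi t r (k : ℤ) z * phi t r' j z) ∧
      ∑' z : ℤ, psi t r (k : ℤ) z * phi t r' j z = if k = j then 1 else 0 := by
  have hpsi_neg : ∀ z ∉ range ((↑) : ℕ → ℤ), psi t r k z * phi t r' j z = 0 := fun z hz => by
    rw [psi_of_neg t hr.1.le k (not_le.1 fun hz0 => hz ⟨z.toNat, Int.toNat_of_nonneg hz0⟩),
      zero_mul]
  have hsum := (Nat.cast_injective.hasSum_iff hpsi_neg).1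
    (hasSum_psi_mul_phi_natCast t hr.1 hr' k j)
  exact ⟨hsum.summable, hsum.tsum_eq⟩

/-- Biorthogonality (Lemma 4.1): for `t > 0`, `n ≥ 1` and `0 ≤ j, k ≤ n-1`, the series
`∑_{z ∈ ℤ} ψ_k(z) φ_j(z)` converges absolutely and equals `δ_{k,j}`. -/
theorem statement3 (t : ℝ) (ht : 0 < t) (n : ℕ) (hn : 1 ≤ n) (j k : ℕ)
    (hj : j < n) (hk : k < n) (r r' : ℝ)
    (hr : r ∈ Set.Ioo (0 : ℝ) 1) (hr' : r' ∈ Set.Ioo (0 : ℝ) 1) :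
    Summable (fun z : ℤ => psi t r (k : ℤ) z * phi t r' j z) ∧
      ∑' z : ℤ, psi t r (k : ℤ) z * phi t r' j z = if k = j then 1 else 0 :=
  statement3_general t j k r r' hr hr'
end

section
/- Let N ≥ 2 and fix integers x_1^1 > x_1^2 > … > x_1^N. Let f : ℤ^N → ℝ be an antisymmetric function of its N arguments (i.e., f changes sign under any transposition of two arguments). Consider the two sets of configurations of integers {x_i^j : 2 ≤ i ≤ j ≤ N} given by D = {x_i^j : x_i^j > x_i^{j+1} for all 2 ≤ i ≤ j ≤ N−1, and x_i^j ≥ x_{i−1}^{j−1} for all 2 ≤ i ≤ j ≤ N} and D' = {x_i^j : x_i^j ≥ x_{i−1}^{j−1} for all 2 ≤ i ≤ j ≤ N}. If the family (f(x_1^N, x_2^N, …, x_N^N)), indexed by configurations in D', is absolutely summable, then ∑_{D} f(x_1^N, x_2^N, …, x_N^N) = ∑_{D'} f(x_1^N, x_2^N, …, x_N^N), where in both sums the values x_1^1, …, x_1^N are held fixed and the sum runs over all remaining variables x_i^j, 2 ≤ i ≤ j ≤ N, subject to the indicated inequalities. -/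
/-- A configuration `{x_i^j}` (encoded as `x : ℕ → ℕ → ℤ`, `x i j = x_i^j`) with the top
row `x_1^j` fixed to the given values `a j`, and normalized to vanish outside the
relevant triangle `{(i,j) : 2 ≤ i ≤ j ≤ N}` so that configurations are determined by the
summed variables `x_i^j`, `2 ≤ i ≤ j ≤ N`. -/
def IsConfig (N : ℕ) (a : ℕ → ℤ) (x : ℕ → ℕ → ℤ) : Prop :=
  (∀ j, x 1 j = a j) ∧
    ∀ i j, i ≠ 1 → ¬(2 ≤ i ∧ i ≤ j ∧ j ≤ N) → x i j = 0

/-- The constraints of the set `D'`: `x_i^j ≥ x_{i-1}^{j-1}` for all `2 ≤ i ≤ j ≤ N`. -/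
def InD' (N : ℕ) (x : ℕ → ℕ → ℤ) : Prop :=
  ∀ i j, 2 ≤ i → i ≤ j → j ≤ N → x (i - 1) (j - 1) ≤ x i j

/-- The constraints of the set `D`: `x_i^j > x_i^{j+1}` for all `2 ≤ i ≤ j ≤ N-1` and
`x_i^j ≥ x_{i-1}^{j-1}` for all `2 ≤ i ≤ j ≤ N`. -/
def InD (N : ℕ) (x : ℕ → ℕ → ℤ) : Prop :=
  (∀ i j, 2 ≤ i → i ≤ j → j ≤ N - 1 → x i (j + 1) < x i j) ∧ InD' N x

/-- Columns with a violation of the strict decrease condition. -/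
def vSet (N : ℕ) (x : ℕ → ℕ → ℤ) : Set ℕ :=
  {j | ∃ i, 2 ≤ i ∧ i ≤ j ∧ j + 1 ≤ N ∧ x i j ≤ x i (j + 1)}

/-- Minimal violating column. -/
noncomputable def mcol (N : ℕ) (x : ℕ → ℕ → ℤ) : ℕ := sInf (vSet N x)

/-- Violating rows in the minimal violating column. -/
def iSet (N : ℕ) (x : ℕ → ℕ → ℤ) : Set ℕ :=
  {i | 2 ≤ i ∧ i ≤ mcol N x ∧ x i (mcol N x) ≤ x i (mcol N x + 1)}

/-- Minimal violating row in the minimal violating column. -/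
noncomputable def irow (N : ℕ) (x : ℕ → ℕ → ℤ) : ℕ := sInf (iSet N x)

/-- The involution: swap the two adjacent diagonals starting right after the minimal
violation. -/
noncomputable def Tmap (N : ℕ) (x : ℕ → ℕ → ℤ) : ℕ → ℕ → ℤ := fun p q =>
  if mcol N x + 1 ≤ q ∧ p + mcol N x + 1 = irow N x + q then x (p + 1) q
  else if mcol N x + 1 ≤ q ∧ p + mcol N x = irow N x + q then x (p - 1) q
  else x p q

theorem Tmap_eval_A (N : ℕ) (y : ℕ → ℕ → ℤ) (p q : ℕ)
    (h1 : mcol N y + 1 ≤ q) (h2 : p + mcol N y + 1 = irow N y + q) :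
    Tmap N y p q = y (p + 1) q := by
  simp only [Tmap]
  rw [if_pos ⟨h1, h2⟩]

theorem Tmap_eval_B (N : ℕ) (y : ℕ → ℕ → ℤ) (p q : ℕ)
    (h1 : mcol N y + 1 ≤ q) (h2 : p + mcol N y = irow N y + q) :
    Tmap N y p q = y (p - 1) q := by
  simp only [Tmap]
  rw [if_neg (by omega), if_pos ⟨h1, h2⟩]

theorem Tmap_eval_O (N : ℕ) (y : ℕ → ℕ → ℤ) (p q : ℕ)
    (h1 : ¬(mcol N y + 1 ≤ q ∧ p + mcol N y + 1 = irow N y + q))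
    (h2 : ¬(mcol N y + 1 ≤ q ∧ p + mcol N y = irow N y + q)) :
    Tmap N y p q = y p q := by
  simp only [Tmap]
  rw [if_neg h1, if_neg h2]

/-- The evaluated function: `f` applied to the bottom row of a configuration. -/
noncomputable def FF (N : ℕ) (f : (Fin N → ℤ) → ℝ) : (ℕ → ℕ → ℤ) → ℝ :=
  fun y => f (fun k : Fin N => y ((k : ℕ) + 1) N)

theorem Tmap_good (N : ℕ) (hN : 2 ≤ N) (a : ℕ → ℤ)
    (ha : ∀ j, 1 ≤ j → j ≤ N - 1 → a (j + 1) < a j)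
    (x : ℕ → ℕ → ℤ) (hcfg : IsConfig N a x) (hD' : InD' N x) (hnD : ¬InD N x) :
    (IsConfig N a (Tmap N x) ∧ InD' N (Tmap N x) ∧ ¬InD N (Tmap N x)) ∧
      Tmap N (Tmap N x) = x ∧
      ∃ k1 k2 : Fin N, k1 ≠ k2 ∧
        (fun k : Fin N => Tmap N x ((k : ℕ) + 1) N) =
          (fun k : Fin N => x ((k : ℕ) + 1) N) ∘ Equiv.swap k1 k2 := by
  have hne : (vSet N x).Nonempty := by
    have hnA : ¬(∀ i j, 2 ≤ i → i ≤ j → j ≤ N - 1 → x i (j + 1) < x i j) := by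
      intro h; exact hnD ⟨h, hD'⟩
    push_neg at hnA
    obtain ⟨i0, j0, h2, hij, hjN, hv⟩ := hnA
    exact ⟨j0, i0, h2, hij, by omega, hv⟩
  have hmV : mcol N x ∈ vSet N x := Nat.sInf_mem hne
  obtain ⟨iw, hw2, hwm, hmN, hwv⟩ := hmV
  have hiV : irow N x ∈ iSet N x := Nat.sInf_mem ⟨iw, hw2, hwm, hwv⟩
  obtain ⟨hi2, him, hviol⟩ := hiV
  have hcolmin : ∀ j, j < mcol N x → j ∉ vSet N x := fun j hj => Nat.notMem_of_lt_sInf hj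
  have hrowmin : ∀ k, k < irow N x → k ∉ iSet N x := fun k hk => Nat.notMem_of_lt_sInf hk
  have hD'pq : ∀ p q, 1 ≤ p → p ≤ q → q + 1 ≤ N → x p q ≤ x (p + 1) (q + 1) := by
    intro p q h1 h2 h3
    have h := hD' (p + 1) (q + 1) (by omega) (by omega) (by omega)
    simpa using h
  have hstrict : ∀ p j, 1 ≤ p → p ≤ j → j + 1 ≤ N → j < mcol N x → x p (j + 1) < x p j := by
    intro p j h1 hpj hjN hjm
    rcases Nat.lt_or_ge p 2 with hp | hp
    · have hp1 : p = 1 := by omega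
      subst hp1
      rw [hcfg.1, hcfg.1]
      exact ha j (by omega) (by omega)
    · by_contra hle
      exact hcolmin j hjm ⟨p, hp, hpj, hjN, not_lt.mp hle⟩
  have hrowstrict : ∀ k, 1 ≤ k → k < irow N x → x k (mcol N x + 1) < x k (mcol N x) := by
    intro k h1 hk
    rcases Nat.lt_or_ge k 2 with hp | hp
    · have hk1 : k = 1 := by omega
      subst hk1
      rw [hcfg.1, hcfg.1]
      exact ha (mcol N x) (by omega) (by omega)
    · by_contra hle
      exact hrowmin k hk ⟨hp, by omega, not_lt.mp hle⟩
  have hcfgT : IsConfig N a (Tmap N x) := by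
    constructor
    · intro j
      rw [Tmap_eval_O N x 1 j (by omega) (by omega)]
      exact hcfg.1 j
    · intro p q hp1 hout
      by_cases hA : mcol N x + 1 ≤ q ∧ p + mcol N x + 1 = irow N x + q
      · rw [Tmap_eval_A N x p q hA.1 hA.2]
        refine hcfg.2 (p + 1) q (by omega) ?_
        rintro ⟨-, h2, h3⟩
        exact hout ⟨by omega, by omega, h3⟩
      · by_cases hB : mcol N x + 1 ≤ q ∧ p + mcol N x = irow N x + q
        · rw [Tmap_eval_B N x p q hB.1 hB.2]
          refine hcfg.2 (p - 1) q (by omega) ?_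
          rintro ⟨h1, h2, h3⟩
          exact hout ⟨by omega, by omega, h3⟩
        · rw [Tmap_eval_O N x p q hA hB]
          exact hcfg.2 p q hp1 hout
  have hD'T : InD' N (Tmap N x) := by
    intro k j hk2 hkj hjN
    obtain ⟨p, rfl⟩ : ∃ p, k = p + 1 := ⟨k - 1, by omega⟩
    obtain ⟨q, rfl⟩ : ∃ q, j = q + 1 := ⟨j - 1, by omega⟩
    simp only [Nat.add_sub_cancel]
    have hp1 : 1 ≤ p := by omega
    have hpq : p ≤ q := by omega
    have hqN : q + 1 ≤ N := hjN
    by_cases hA : mcol N x + 1 ≤ q + 1 ∧ (p + 1) + mcol N x + 1 = irow N x + (q + 1)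
    · rw [Tmap_eval_A N x (p + 1) (q + 1) hA.1 hA.2]
      by_cases hq : mcol N x + 1 ≤ q
      · rw [Tmap_eval_A N x p q hq (by omega)]
        exact hD'pq (p + 1) q (by omega) (by omega) (by omega)
      · rw [Tmap_eval_O N x p q (by omega) (by omega)]
        obtain ⟨q', rfl⟩ : ∃ q', q = q' + 1 := ⟨q - 1, by omega⟩
        have h1 : x p (q' + 1) < x p q' := hstrict p q' (by omega) (by omega) (by omega) (by omega)
        have h2 : x p q' ≤ x (p + 1) (q' + 1) := hD'pq p q' (by omega) (by omega) (by omega)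
        have h3 : x (p + 1) (q' + 1) ≤ x (p + 1 + 1) (q' + 1 + 1) :=
          hD'pq (p + 1) (q' + 1) (by omega) (by omega) (by omega)
        linarith
    · by_cases hB : mcol N x + 1 ≤ q + 1 ∧ (p + 1) + mcol N x = irow N x + (q + 1)
      · rw [Tmap_eval_B N x (p + 1) (q + 1) hB.1 hB.2]
        simp only [Nat.add_sub_cancel]
        by_cases hq : mcol N x + 1 ≤ q
        · rw [Tmap_eval_B N x p q hq (by omega)]
          obtain ⟨p', rfl⟩ : ∃ p', p = p' + 1 := ⟨p - 1, by omega⟩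
          simp only [Nat.add_sub_cancel]
          exact hD'pq p' q (by omega) (by omega) (by omega)
        · rw [Tmap_eval_O N x p q (by omega) (by omega)]
          have hq' : q = mcol N x := by omega
          have hp' : p = irow N x := by omega
          rw [hq', hp']
          exact hviol
      · have hA' : ¬(mcol N x + 1 ≤ q ∧ p + mcol N x + 1 = irow N x + q) := by omega
        have hB' : ¬(mcol N x + 1 ≤ q ∧ p + mcol N x = irow N x + q) := by omega
        rw [Tmap_eval_O N x p q hA' hB', Tmap_eval_O N x (p + 1) (q + 1) hA hB]
        exact hD'pq p q hp1 hpq hqN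
  have hTlow : ∀ p q, q ≤ mcol N x → Tmap N x p q = x p q := by
    intro p q h
    exact Tmap_eval_O N x p q (by omega) (by omega)
  have hTmi : Tmap N x (irow N x) (mcol N x + 1) = x (irow N x + 1) (mcol N x + 1) :=
    Tmap_eval_A N x _ _ le_rfl (by omega)
  have hbase : x (irow N x) (mcol N x) ≤ x (irow N x + 1) (mcol N x + 1) :=
    hD'pq _ _ (by omega) him (by omega)
  have hmemT : mcol N x ∈ vSet N (Tmap N x) := by
    refine ⟨irow N x, hi2, him, hmN, ?_⟩
    rw [hTlow _ _ le_rfl, hTmi]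
    exact hbase
  have hmcolT : mcol N (Tmap N x) = mcol N x := by
    refine le_antisymm (Nat.sInf_le hmemT) (le_csInf ⟨_, hmemT⟩ ?_)
    intro j hj
    by_contra hlt
    push_neg at hlt
    obtain ⟨p, hp2, hpj, hjN', hv⟩ := hj
    rw [hTlow p j (by omega), hTlow p (j + 1) (by omega)] at hv
    exact absurd hv (not_le.mpr (hstrict p j (by omega) hpj hjN' hlt))
  have hirowT : irow N (Tmap N x) = irow N x := by
    have hmemI : irow N x ∈ iSet N (Tmap N x) := by
      refine ⟨hi2, ?_, ?_⟩
      · rw [hmcolT]; exact him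
      · rw [hmcolT, hTlow _ _ le_rfl, hTmi]
        exact hbase
    refine le_antisymm (Nat.sInf_le hmemI) (le_csInf ⟨_, hmemI⟩ ?_)
    intro k hk
    by_contra hlt
    push_neg at hlt
    obtain ⟨hk2, hkm, hv⟩ := hk
    rw [hmcolT] at hkm hv
    rw [hTlow k _ le_rfl, Tmap_eval_O N x k (mcol N x + 1) (by omega) (by omega)] at hv
    exact absurd hv (not_le.mpr (hrowstrict k (by omega) hlt))
  have hnDT : ¬InD N (Tmap N x) := by
    rintro ⟨hstr, -⟩
    have h := hstr (irow N x) (mcol N x) hi2 him (by omega)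
    rw [hTmi, hTlow _ _ le_rfl] at h
    exact absurd hbase (not_le.mpr h)
  have hTT : Tmap N (Tmap N x) = x := by
    funext p q
    by_cases hA : mcol N x + 1 ≤ q ∧ p + mcol N x + 1 = irow N x + q
    · rw [Tmap_eval_A N (Tmap N x) p q (by rw [hmcolT]; exact hA.1)
        (by rw [hmcolT, hirowT]; exact hA.2)]
      rw [Tmap_eval_B N x (p + 1) q hA.1 (by omega)]
      simp
    · by_cases hB : mcol N x + 1 ≤ q ∧ p + mcol N x = irow N x + q
      · rw [Tmap_eval_B N (Tmap N x) p q (by rw [hmcolT]; exact hB.1)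
          (by rw [hmcolT, hirowT]; exact hB.2)]
        have hp : 1 ≤ p := by omega
        rw [Tmap_eval_A N x (p - 1) q hB.1 (by omega)]
        congr 1
        omega
      · rw [Tmap_eval_O N (Tmap N x) p q (by rw [hmcolT, hirowT]; exact hA)
          (by rw [hmcolT, hirowT]; exact hB)]
        exact Tmap_eval_O N x p q hA hB
  obtain ⟨t, ht⟩ : ∃ t, N = mcol N x + 1 + t := ⟨N - mcol N x - 1, by omega⟩
  obtain ⟨s, hs⟩ : ∃ s, irow N x = s + 2 := ⟨irow N x - 2, by omega⟩
  refine ⟨⟨hcfgT, hD'T, hnDT⟩, hTT, ⟨s + 1 + t, by omega⟩, ⟨s + 2 + t, by omega⟩,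
    ?_, ?_⟩
  · intro h
    rw [Fin.mk.injEq] at h
    omega
  · funext k
    simp only [Function.comp_apply]
    rcases eq_or_ne k ⟨s + 1 + t, by omega⟩ with hk1 | hk1
    · subst hk1
      rw [Equiv.swap_apply_left]
      show Tmap N x (s + 1 + t + 1) N = x (s + 2 + t + 1) N
      rw [Tmap_eval_A N x _ _ (by omega) (by omega)]
      show x (s + 1 + t + 1 + 1) N = x (s + 2 + t + 1) N
      have e : s + 1 + t + 1 + 1 = s + 2 + t + 1 := by omega
      rw [e]
    · rcases eq_or_ne k ⟨s + 2 + t, by omega⟩ with hk2 | hk2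
      · subst hk2
        rw [Equiv.swap_apply_right]
        show Tmap N x (s + 2 + t + 1) N = x (s + 1 + t + 1) N
        rw [Tmap_eval_B N x _ _ (by omega) (by omega)]
        show x (s + 2 + t + 1 - 1) N = x (s + 1 + t + 1) N
        have e : s + 2 + t + 1 - 1 = s + 1 + t + 1 := by omega
        rw [e]
      · rw [Equiv.swap_apply_of_ne_of_ne hk1 hk2]
        have h1 : (k : ℕ) ≠ s + 1 + t := fun h => hk1 (Fin.ext h)
        have h2 : (k : ℕ) ≠ s + 2 + t := fun h => hk2 (Fin.ext h)
        exact Tmap_eval_O N x _ _ (by omega) (by omega)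

/-- Summation over a symmetric part of the domain vanishes: for `N ≥ 2`, fixed integers
`x_1^1 > x_1^2 > … > x_1^N` (given by `a`), and `f : ℤ^N → ℝ` antisymmetric (changing
sign under any transposition of two of its arguments), if the family
`f(x_1^N, …, x_N^N)` indexed by the configurations in `D'` is absolutely summable, then
`∑_D f(x_1^N, …, x_N^N) = ∑_{D'} f(x_1^N, …, x_N^N)`. -/
theorem statement4 (N : ℕ) (hN : 2 ≤ N) (a : ℕ → ℤ)
    (ha : ∀ j, 1 ≤ j → j ≤ N - 1 → a (j + 1) < a j)
    (f : (Fin N → ℤ) → ℝ)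
    (hf : ∀ (v : Fin N → ℤ) (i j : Fin N), i ≠ j → f (v ∘ Equiv.swap i j) = -f v)
    (hsum : Summable (fun x : {x : ℕ → ℕ → ℤ // IsConfig N a x ∧ InD' N x} =>
      f (fun k : Fin N => x.1 ((k : ℕ) + 1) N))) :
    ∑' x : {x : ℕ → ℕ → ℤ // IsConfig N a x ∧ InD N x},
        f (fun k : Fin N => x.1 ((k : ℕ) + 1) N) =
      ∑' x : {x : ℕ → ℕ → ℤ // IsConfig N a x ∧ InD' N x},
        f (fun k : Fin N => x.1 ((k : ℕ) + 1) N) := by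
  classical
  set S : Set (ℕ → ℕ → ℤ) := {y | IsConfig N a y ∧ InD N y} with hSdef
  set S' : Set (ℕ → ℕ → ℤ) := {y | IsConfig N a y ∧ InD' N y} with hS'def
  have hsub : S ⊆ S' := fun y hy => ⟨hy.1, hy.2.2⟩
  -- summability of indicators
  have hsum2 : Summable ((FF N f) ∘ ((↑) : ↥S' → (ℕ → ℕ → ℤ))) := hsum
  have hsum' : Summable (S'.indicator (FF N f)) :=
    summable_subtype_iff_indicator.mp hsum2
  have hsumS : Summable (S.indicator (FF N f)) := by
    have h := hsum'.indicator S
    rwa [Set.indicator_indicator, Set.inter_eq_self_of_subset_left hsub] at h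
  have hsumD : Summable ((S' \ S).indicator (FF N f)) := by
    have h := hsum'.indicator (S' \ S)
    rwa [Set.indicator_indicator, Set.inter_eq_self_of_subset_left Set.diff_subset] at h
  -- the sum over the difference vanishes, by the involution
  have hzero : ∑' (z : ↥(S' \ S)), FF N f z.1 = 0 := by
    have hgood := fun z : ↥(S' \ S) =>
      Tmap_good N hN a ha z.1 z.2.1.1 z.2.1.2 (fun h => z.2.2 ⟨z.2.1.1, h⟩)
    set σ : ↥(S' \ S) → ↥(S' \ S) := fun z =>
      ⟨Tmap N z.1, ⟨⟨(hgood z).1.1, (hgood z).1.2.1⟩, fun hmem => (hgood z).1.2.2 hmem.2⟩⟩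
      with hσdef
    have hinv : Function.Involutive σ := fun z => Subtype.ext (hgood z).2.1
    have h1 : ∑' z : ↥(S' \ S), FF N f z.1 = ∑' z : ↥(S' \ S), FF N f ((σ z)).1 :=
      (Equiv.tsum_eq hinv.toPerm (fun z : ↥(S' \ S) => FF N f z.1)).symm
    have hneg : ∀ z : ↥(S' \ S), FF N f ((σ z)).1 = - FF N f z.1 := by
      intro z
      obtain ⟨k1, k2, hkne, hbot⟩ := (hgood z).2.2
      show FF N f (Tmap N z.1) = - FF N f z.1
      simp only [FF]
      rw [hbot]
      exact hf _ k1 k2 hkne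
    have h2 : ∑' z : ↥(S' \ S), FF N f ((σ z)).1 = ∑' z : ↥(S' \ S), - FF N f z.1 :=
      tsum_congr hneg
    rw [tsum_neg] at h2
    linarith [h1, h2]
  have hzero' : ∑' y, (S' \ S).indicator (FF N f) y = 0 := by
    rw [← tsum_subtype]
    exact hzero
  have hun : S'.indicator (FF N f) = S.indicator (FF N f) + (S' \ S).indicator (FF N f) := by
    conv_lhs => rw [← Set.union_diff_cancel hsub]
    exact Set.indicator_union_of_disjoint Set.disjoint_sdiff_right (FF N f)
  have hfin : ∑' y, S'.indicator (FF N f) y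
      = ∑' y, S.indicator (FF N f) y + ∑' y, (S' \ S).indicator (FF N f) y := by
    rw [hun]
    simp only [Pi.add_apply]
    exact Summable.tsum_add hsumS hsumD
  show ∑' z : {x : ℕ → ℕ → ℤ // IsConfig N a x ∧ InD N x}, FF N f z.1
      = ∑' z : {x : ℕ → ℕ → ℤ // IsConfig N a x ∧ InD' N x}, FF N f z.1
  calc ∑' z : {x : ℕ → ℕ → ℤ // IsConfig N a x ∧ InD N x}, FF N f z.1
      = ∑' y, S.indicator (FF N f) y := tsum_subtype S (FF N f)
    _ = ∑' y, S'.indicator (FF N f) y := by rw [hfin, hzero', add_zero]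
    _ = ∑' z : {x : ℕ → ℕ → ℤ // IsConfig N a x ∧ InD' N x}, FF N f z.1 :=
        (tsum_subtype S' (FF N f)).symm
end

section
/- Let t > 0 and let k, z be integers with 0 ≤ k ≤ z. Then ψ_k(z) = e^{−t} · t^{z−k}/(z−k)! · C_k(z−k, t), where C_k is the Charlier polynomial. -/
/-!
On the contour `w ≠ 0`, so with `N = z - k` the integrand of `ψ_k(z)` is
`w^{-(N+1)} (1 - w)^k e^{(w-1)t}` up to the sign `(-1)^k`, and Cauchy's formula for derivatives
makes `ψ_k(z)` the `N`-th Taylor coefficient at `0` of `(1 - w)^k e^{(w-1)t}`. The Leibniz rule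
gives this coefficient as `e^{-t}/N! · ∑ᵢ C(N,i) (-1)^i k^{(i)} t^{N-i}` (falling factorials
`k^{(i)}`), and `C(N,i) k^{(i)} = C(k,i) N^{(i)}` turns it into the Charlier sum.
-/

/-- The Charlier polynomial
`C_n(x,t) = ∑_{j=0}^{n} binom(n,j) · x(x-1)⋯(x-j+1) · (-1/t)^j`. -/
noncomputable def charlier (n : ℕ) (x : ℝ) (t : ℝ) : ℝ :=
  ∑ j ∈ Finset.range (n + 1),
    (n.choose j : ℝ) * (∏ m ∈ Finset.range j, (x - m)) * (-1 / t) ^ j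

open Complex Metric Finset Real

theorem circleIntegral_sub_zpow_neg_succ_mul {f : ℂ → ℂ} {c : ℂ} {R : ℝ} (hR : 0 < R)
    (hf : DifferentiableOn ℂ f (closedBall c R)) (n : ℕ) :
    ∮ z in C(c, R), (z - c) ^ (-(n : ℤ) - 1) * f z
      = 2 * π * I / n.factorial * iteratedDeriv n f c := by
  rw [← smul_eq_mul, ← hf.circleIntegral_one_div_sub_center_pow_smul hR n]
  congr 1 with z
  rw [smul_eq_mul, ← neg_add', zpow_neg, one_div, ← Nat.cast_succ, zpow_natCast]

theorem psi_add_eq_iteratedDeriv (t : ℝ) {r : ℝ} (hr : 0 < r) (k N : ℕ) :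
    psi t r k (k + N : ℕ)
      = iteratedDeriv N (fun w : ℂ => (1 - w) ^ k * exp ((w - 1) * t)) 0 / N.factorial := by
  have hintegrand : Set.EqOn
      (fun w : ℂ => (-1) ^ (k : ℤ) *
        (w ^ (-((k + N : ℕ) : ℤ) - 1) * exp ((w - 1) * t) * ((w - 1) * w) ^ (k : ℤ)))
      (fun w => (w - 0) ^ (-(N : ℤ) - 1) * ((1 - w) ^ k * exp ((w - 1) * t))) (sphere 0 r) := by
    intro w hw
    have hw0 : w ≠ 0 := ne_of_mem_sphere hw hr.ne'
    dsimp only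
    rw [show -((k + N : ℕ) : ℤ) - 1 = (-(N : ℤ) - 1) - k by push_cast; ring, zpow_sub₀ hw0,
      sub_zero, show 1 - w = -1 * (w - 1) by ring]
    simp only [zpow_natCast, mul_pow]
    field_simp
  rw [psi, div_mul_eq_mul_div, ← circleIntegral.integral_const_mul,
    circleIntegral.integral_congr hr.le hintegrand,
    circleIntegral_sub_zpow_neg_succ_mul hr (by fun_prop), mul_div_right_comm,
    div_div_cancel_left' two_pi_I_ne_zero, inv_mul_eq_div]

theorem iteratedDeriv_one_sub_pow_zero (k i : ℕ) :
    iteratedDeriv i (fun w : ℂ => (1 - w) ^ k) 0 = (-1) ^ i * k.descFactorial i := by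
  rw [iteratedDeriv_comp_const_sub i (· ^ k)]
  simp

theorem iteratedDeriv_cexp_sub_one_mul_zero (m : ℕ) (t : ℂ) :
    iteratedDeriv m (fun w : ℂ => exp ((w - 1) * t)) 0 = t ^ m * exp (-t) := by
  simp_rw [mul_comm _ t]
  rw [iteratedDeriv_comp_sub_const m (fun w => exp (t * w)), iteratedDeriv_cexp_const_mul]
  simp

theorem iteratedDeriv_one_sub_pow_mul_cexp_zero (k N : ℕ) (t : ℂ) :
    iteratedDeriv N (fun w : ℂ => (1 - w) ^ k * exp ((w - 1) * t)) 0
      = ∑ i ∈ range (N + 1),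
          N.choose i * ((-1) ^ i * k.descFactorial i) * (t ^ (N - i) * exp (-t)) := by
  rw [iteratedDeriv_fun_mul (by fun_prop) (by fun_prop)]
  simp only [iteratedDeriv_one_sub_pow_zero, iteratedDeriv_cexp_sub_one_mul_zero]

theorem charlier_natCast_eq_sum_descFactorial (k N : ℕ) (t : ℝ) :
    charlier k N t = ∑ j ∈ range (k + 1), k.choose j * N.descFactorial j * (-1 / t) ^ j := by
  simp only [charlier, ← descPochhammer_eval_eq_prod_range, descPochhammer_eval_eq_descFactorial]

theorem pow_mul_charlier_natCast (k N : ℕ) {t : ℝ} (ht : t ≠ 0) :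
    t ^ N * charlier k N t
      = ∑ i ∈ range (N + 1), N.choose i * ((-1) ^ i * k.descFactorial i) * t ^ (N - i) := by
  rw [charlier_natCast_eq_sum_descFactorial, mul_sum]
  have hsum : ∀ {M} (u : ℕ → ℝ), M ≤ k + N → (∀ i, M < i → u i = 0) →
      ∑ i ∈ range (M + 1), u i = ∑ i ∈ range (k + N + 1), u i := fun u hM hu =>
    (eventually_constant_sum (fun i hi => hu i hi) (by omega)).symm
  rw [hsum (M := k) _ (by omega) fun i hi => ?_, hsum (M := N) _ (by omega) fun i hi => ?_]
  · refine sum_congr rfl fun i _ => ?_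
    rcases le_or_gt i N with hiN | hiN
    · have hchoose : (k.choose i : ℝ) * N.descFactorial i = N.choose i * k.descFactorial i := by
        simp only [Nat.descFactorial_eq_factorial_mul_choose]; push_cast; ring
      have hpow : t ^ N * (-1 / t) ^ i = (-1) ^ i * t ^ (N - i) := by
        rw [← Nat.sub_add_cancel hiN, pow_add, Nat.add_sub_cancel, div_pow]
        field_simp
      linear_combination (-1) ^ i * t ^ (N - i) * hchoose + k.choose i * N.descFactorial i * hpow
    · simp [Nat.choose_eq_zero_of_lt hiN, Nat.descFactorial_eq_zero_iff_lt.2 hiN]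
  · simp [Nat.choose_eq_zero_of_lt hi]
  · simp [Nat.choose_eq_zero_of_lt hi]

/-- For `t > 0` and integers `0 ≤ k ≤ z`,
`ψ_k(z) = e^{-t} · t^{z-k}/(z-k)! · C_k(z-k, t)`, with `C_k` the Charlier polynomial. -/
theorem statement14 (t : ℝ) (ht : 0 < t) (k z : ℕ) (hkz : k ≤ z) (r : ℝ)
    (hr : r ∈ Set.Ioo (0 : ℝ) 1) :
    psi t r (k : ℤ) (z : ℤ) =
      ((Real.exp (-t) * t ^ (z - k) / (Nat.factorial (z - k)) *
        charlier k ((z : ℝ) - (k : ℝ)) t : ℝ) : ℂ) := by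
  obtain ⟨N, rfl⟩ := Nat.exists_eq_add_of_le hkz
  have hx : ((k + N : ℕ) : ℝ) - k = N := by push_cast; ring
  rw [psi_add_eq_iteratedDeriv t hr.1 k N, iteratedDeriv_one_sub_pow_mul_cexp_zero,
    Nat.add_sub_cancel_left, hx, mul_div_right_comm, mul_assoc,
    pow_mul_charlier_natCast k N ht.ne']
  push_cast
  rw [sum_div, mul_sum]
  exact sum_congr rfl fun i _ => by ring
end

section
/- Let t > 0 and let k ≥ 0 and z ≥ 0 be integers. Then ψ_k(z) = w_t(z) · ∑_{l=k}^{2k} S_{k,l} C_l(z,t), where w_t(z) = e^{−t} t^z / z!, S_{k,l} = (−1)^{l−k} binom(k, l−k), and C_l is the Charlier polynomial. -/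
open Complex Metric Finset Nat
open scoped Real

/-- The coefficient of `w^z` in the power series of `w^n e^{cw}`. -/
noncomputable def expMonomialCoeff {K : Type*} [Field K] (c : K) (z n : ℕ) : K :=
  if n ≤ z then c ^ (z - n) / (z - n)! else 0

theorem ofReal_expMonomialCoeff (c : ℝ) (z n : ℕ) :
    ((expMonomialCoeff c z n : ℝ) : ℂ) = expMonomialCoeff (c : ℂ) z n := by
  unfold expMonomialCoeff
  split_ifs <;> simp

theorem circleIntegral_zpow_mul_pow_mul_cexp {r : ℝ} (hr : 0 < r) (z m : ℕ) (c : ℂ) :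
    ∮ w in C(0, r), w ^ (-(z : ℤ) - 1) * (w ^ m * exp (c * w)) =
      2 * π * I * expMonomialCoeff c z m := by
  have hexp : Differentiable ℂ fun w : ℂ => exp (c * w) := by fun_prop
  rcases le_or_gt m z with hmz | hzm
  · obtain ⟨n, rfl⟩ := Nat.exists_eq_add_of_le hmz
    have hcongr : Set.EqOn (fun w : ℂ => w ^ (-((m + n : ℕ) : ℤ) - 1) * (w ^ m * exp (c * w)))
        (fun w => (1 / (w - 0) ^ (n + 1)) • exp (c * w)) (sphere 0 r) := by
      intro w hw
      have hw0 : w ≠ 0 := ne_zero_of_mem_sphere hr.ne' ⟨w, hw⟩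
      simp only [sub_zero, smul_eq_mul]
      rw [show -((m + n : ℕ) : ℤ) - 1 = -((m + (n + 1) : ℕ) : ℤ) by push_cast; ring,
        zpow_neg, zpow_natCast, pow_add]
      field_simp
    rw [circleIntegral.integral_congr hr.le hcongr,
      hexp.differentiableOn.circleIntegral_one_div_sub_center_pow_smul hr n,
      iteratedDeriv_cexp_const_mul, expMonomialCoeff, if_pos hmz, Nat.add_sub_cancel_left]
    simp only [mul_zero, Complex.exp_zero, mul_one, smul_eq_mul]
    ring
  · obtain ⟨n, rfl⟩ := Nat.exists_eq_add_of_lt hzm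
    have hcongr : Set.EqOn (fun w : ℂ => w ^ (-(z : ℤ) - 1) * (w ^ (z + n + 1) * exp (c * w)))
        (fun w => w ^ n * exp (c * w)) (sphere 0 r) := by
      intro w hw
      have hw0 : w ≠ 0 := ne_zero_of_mem_sphere hr.ne' ⟨w, hw⟩
      simp only
      rw [zpow_sub₀ hw0, zpow_neg, zpow_natCast, zpow_one, pow_add, pow_add]
      field_simp
    rw [circleIntegral.integral_congr hr.le hcongr, expMonomialCoeff, if_neg (by omega), mul_zero]
    exact ((differentiable_pow n).mul hexp).diffContOnCl.circleIntegral_eq_zero hr.le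

theorem neg_one_pow_mul_neg_one_pow_add {M : Type*} [Monoid M] [HasDistribNeg M] (k i : ℕ) :
    (-1 : M) ^ k * (-1) ^ (k + i) = (-1) ^ i := by
  rw [pow_add, ← mul_assoc, ← pow_add, Even.neg_one_pow ⟨k, rfl⟩, one_mul]

theorem cexp_sub_one_mul_mul_pow_eq_sum (t w : ℂ) (k : ℕ) :
    exp ((w - 1) * t) * ((w - 1) * w) ^ k = exp (-t) * ∑ j ∈ range (k + 1),
      (-1) ^ (k + j) * (k.choose j : ℂ) * (w ^ (k + j) * exp (t * w)) := by
  rw [show (w - 1) * t = -t + t * w by ring, exp_add, mul_pow, sub_pow, mul_sum, sum_mul, mul_sum]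
  refine sum_congr rfl fun j _ => ?_
  ring

theorem psi_eq_sum_expMonomialCoeff (t : ℝ) {r : ℝ} (hr : 0 < r) (k z : ℕ) :
    psi t r k z = exp (-t) * ∑ j ∈ range (k + 1),
      (-1) ^ j * (k.choose j : ℂ) * expMonomialCoeff (t : ℂ) z (k + j) := by
  have hintegrable (a : ℂ) (m : ℕ) :
      CircleIntegrable (fun w : ℂ => a * (w ^ (-(z : ℤ) - 1) * (w ^ m * exp (t * w)))) 0 r := by
    refine ContinuousOn.circleIntegrable hr.le fun w hw => ContinuousAt.continuousWithinAt ?_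
    have hw0 : w ≠ 0 := ne_zero_of_mem_sphere hr.ne' ⟨w, hw⟩
    fun_prop (disch := exact Or.inl hw0)
  have hintegrand :
      (fun w : ℂ => w ^ (-(z : ℤ) - 1) * exp ((w - 1) * t) * ((w - 1) * w) ^ (k : ℤ)) =
      fun w => ∑ j ∈ range (k + 1), exp (-t) * (-1) ^ (k + j) * (k.choose j : ℂ) *
        (w ^ (-(z : ℤ) - 1) * (w ^ (k + j) * exp (t * w))) := by
    funext w
    rw [zpow_natCast, mul_assoc, cexp_sub_one_mul_mul_pow_eq_sum, mul_sum, mul_sum]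
    exact sum_congr rfl fun j _ => by ring
  rw [psi, hintegrand, circleIntegral.integral_fun_sum fun j _ => hintegrable _ _]
  simp_rw [circleIntegral.integral_const_mul, circleIntegral_zpow_mul_pow_mul_cexp hr, mul_sum]
  refine sum_congr rfl fun j _ => ?_
  rw [zpow_natCast, ← neg_one_pow_mul_neg_one_pow_add k j]
  field_simp

open Polynomial in
theorem sum_range_neg_one_pow_mul_choose_mul_choose_add (k j : ℕ) :
    ∑ i ∈ range (k + 1), (-1 : ℤ) ^ i * k.choose i * (k + i).choose j =
      (-1) ^ k * if k ≤ j then (k.choose (j - k) : ℤ) else 0 := by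
  have hpoly : ∑ i ∈ range (k + 1), C ((-1 : ℤ) ^ i * k.choose i) * (1 + X) ^ (k + i) =
      C ((-1) ^ k) * (X ^ k * (1 + X) ^ k) := by
    have hbinom := add_pow (-(1 + X) : ℤ[X]) 1 k
    rw [show -(1 + X) + 1 = -(X : ℤ[X]) by ring, neg_pow] at hbinom
    rw [C_pow, C_neg, C_1, ← mul_assoc, hbinom, sum_mul]
    refine sum_congr rfl fun i _ => ?_
    rw [C_mul, C_pow, C_neg, C_1, ← C_eq_natCast, neg_pow (1 + X : ℤ[X]), one_pow, mul_one,
      pow_add]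
    ring
  have hcoeff := congrArg (coeff · j) hpoly
  simp only [finsetSum_coeff, coeff_C_mul, coeff_one_add_X_pow, coeff_X_pow_mul'] at hcoeff
  rw [hcoeff]

theorem sum_range_neg_one_pow_mul_choose_mul_sum_choose_mul {R : Type*} [CommRing R] (k : ℕ)
    (a : ℕ → R) :
    ∑ i ∈ range (k + 1),
        (-1) ^ i * k.choose i * ∑ j ∈ range (k + i + 1), (k + i).choose j * a j =
      (-1) ^ k * ∑ i ∈ range (k + 1), k.choose i * a (k + i) := by
  have hextend : ∀ i ∈ range (k + 1),
      ∑ j ∈ range (k + i + 1), ((k + i).choose j : R) * a j =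
        ∑ j ∈ range (k + (k + 1)), (k + i).choose j * a j := by
    intro i hi
    refine sum_subset (range_subset_range.2 (by simp at hi; omega)) fun j _ hj => ?_
    rw [Nat.choose_eq_zero_of_lt (by simp at hj; omega), Nat.cast_zero, zero_mul]
  have hcoeff (j : ℕ) : ∑ i ∈ range (k + 1), (-1 : R) ^ i * k.choose i * (k + i).choose j =
      (-1) ^ k * if k ≤ j then (k.choose (j - k) : R) else 0 := by
    exact_mod_cast
      congrArg (Int.cast : ℤ → R) (sum_range_neg_one_pow_mul_choose_mul_choose_add k j)
  rw [sum_congr rfl fun i hi => congrArg _ (hextend i hi)]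
  simp_rw [mul_sum, ← mul_assoc]
  rw [sum_comm]
  simp_rw [← sum_mul, hcoeff]
  rw [sum_range_add, sum_eq_zero fun j hj => by simp [(mem_range.1 hj).not_ge], zero_add]
  refine sum_congr rfl fun i _ => ?_
  simp only [le_add_iff_nonneg_right, zero_le, if_true, Nat.add_sub_cancel_left]

theorem pow_div_factorial_mul_charlier {t : ℝ} (ht : t ≠ 0) (n z : ℕ) :
    t ^ z / z ! * charlier n z t =
      ∑ j ∈ range (n + 1), n.choose j * ((-1) ^ j * expMonomialCoeff t z j) := by
  rw [charlier, mul_sum]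
  refine sum_congr rfl fun j _ => ?_
  rw [← descPochhammer_eval_eq_prod_range, descPochhammer_eval_eq_descFactorial, expMonomialCoeff]
  split_ifs with hjz
  · have hfac : ((z - j)! : ℝ) * z.descFactorial j = z ! := by
      exact_mod_cast Nat.factorial_mul_descFactorial hjz
    have hdesc : (z.descFactorial j : ℝ) ≠ 0 := by
      exact_mod_cast (Nat.descFactorial_pos.2 hjz).ne'
    rw [← hfac, ← pow_sub_mul_pow t hjz, div_pow]
    field_simp
  · rw [Nat.descFactorial_of_lt (not_le.1 hjz)]
    simp

theorem pow_div_factorial_mul_sum_Icc_charlier {t : ℝ} (ht : t ≠ 0) (k z : ℕ) :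
    t ^ z / z ! *
        ∑ l ∈ Icc k (2 * k), (-1) ^ (l - k) * (k.choose (l - k) : ℝ) * charlier l z t =
      ∑ i ∈ range (k + 1), (-1) ^ i * (k.choose i : ℝ) * expMonomialCoeff t z (k + i) := by
  rw [← Ico_add_one_right_eq_Icc, sum_Ico_eq_sum_range, show 2 * k + 1 - k = k + 1 by omega,
    mul_sum]
  calc ∑ i ∈ range (k + 1), t ^ z / z ! *
        ((-1) ^ (k + i - k) * (k.choose (k + i - k) : ℝ) * charlier (k + i) z t)
      = ∑ i ∈ range (k + 1), (-1) ^ i * (k.choose i : ℝ) *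
          ∑ j ∈ range (k + i + 1), (k + i).choose j * ((-1) ^ j * expMonomialCoeff t z j) := by
        refine sum_congr rfl fun i _ => ?_
        rw [Nat.add_sub_cancel_left, ← pow_div_factorial_mul_charlier ht]
        ring
    _ = ∑ i ∈ range (k + 1), (-1) ^ i * (k.choose i : ℝ) * expMonomialCoeff t z (k + i) := by
        rw [sum_range_neg_one_pow_mul_choose_mul_sum_choose_mul, mul_sum]
        refine sum_congr rfl fun i _ => ?_
        rw [← neg_one_pow_mul_neg_one_pow_add k i]
        ring

/-- For `t > 0` and integers `k ≥ 0`, `z ≥ 0`,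
`ψ_k(z) = w_t(z) · ∑_{l=k}^{2k} S_{k,l} C_l(z,t)`, where `w_t(z) = e^{-t} t^z / z!` and
`S_{k,l} = (-1)^{l-k} binom(k, l-k)`, with `C_l` the Charlier polynomial. -/
theorem statement15 (t : ℝ) (ht : 0 < t) (k z : ℕ) (r : ℝ)
    (hr : r ∈ Set.Ioo (0 : ℝ) 1) :
    psi t r (k : ℤ) (z : ℤ) =
      ((Real.exp (-t) * t ^ z / (Nat.factorial z) *
        ∑ l ∈ Finset.Icc k (2 * k),
          (-1 : ℝ) ^ (l - k) * (k.choose (l - k) : ℝ) * charlier l (z : ℝ) t : ℝ) : ℂ) := by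
  rw [psi_eq_sum_expMonomialCoeff t hr.1, mul_div_assoc, mul_assoc,
    pow_div_factorial_mul_sum_Icc_charlier ht.ne']
  simp [ofReal_expMonomialCoeff]
end

section
/- Let N ≥ 1 and define the N×N matrices S̃ and T, with rows and columns indexed by 0, 1, …, N−1, by S̃_{i,j} = (−1)^{j−i} binom(i, j−i) if i ≤ j ≤ 2i (and S̃_{i,j} = 0 otherwise), and T_{i,j} = (i/(2j−i)) · binom(2j−i, j−i) if 0 < i ≤ j, T_{0,0} = 1, and T_{i,j} = 0 otherwise. Then S̃ · T = Id and T · S̃ = Id; that is, T = S̃^{−1}. -/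
/-- The upper-triangular change-of-basis matrix `S̃` with entries
`S̃_{i,j} = (-1)^{j-i} binom(i, j-i)` for `i ≤ j ≤ 2i` and `0` otherwise
(rows and columns indexed by `0, 1, …, N-1`). -/
def Stilde (N : ℕ) : Matrix (Fin N) (Fin N) ℚ := fun i j =>
  if (i : ℕ) ≤ (j : ℕ) ∧ (j : ℕ) ≤ 2 * (i : ℕ) then
    (-1 : ℚ) ^ ((j : ℕ) - (i : ℕ)) * ((i : ℕ).choose ((j : ℕ) - (i : ℕ)) : ℚ)
  else 0

/-- The matrix `T` with entries `T_{i,j} = (i/(2j-i))·binom(2j-i, j-i)` for `0 < i ≤ j`,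
`T_{0,0} = 1`, and `T_{i,j} = 0` otherwise (rows and columns indexed by `0, 1, …, N-1`). -/
def Tmat (N : ℕ) : Matrix (Fin N) (Fin N) ℚ := fun i j =>
  if (i : ℕ) = 0 ∧ (j : ℕ) = 0 then 1
  else if 0 < (i : ℕ) ∧ (i : ℕ) ≤ (j : ℕ) then
    (((i : ℕ) : ℚ) / ((2 * (j : ℕ) - (i : ℕ) : ℕ) : ℚ)) *
      ((2 * (j : ℕ) - (i : ℕ)).choose ((j : ℕ) - (i : ℕ)) : ℚ)
  else 0

/-!
The entries of `T` are the ballot numbers `b(j, k) = j/(2k-j) · binom(2k-j, k-j)`, which satisfy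
`b(j+1, k+1) = b(j, k) + b(j+2, k+1)`: the forward difference in `j` of column `k+1`, shifted by
one, is minus column `k`. Row `i` of `S̃` takes `(-1)^i` times the `i`-th forward difference at `i`,
so iterating the recurrence `i` times gives `(S̃ T)_{i, i+d} = b(0, d) = δ_{d,0}`. Entries below
the diagonal vanish by triangularity.
-/

open Finset fwdDiff

section Recurrence

variable {G : Type*} [AddCommGroup G] {f : ℕ → ℕ → G}

theorem fwdDiff_iter_eq_of_recurrence
    (hf : ∀ j k, f (j + 1) (k + 1) = f j k + f (j + 2) (k + 1)) (n j k : ℕ) :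
    (Δ_[1])^[n] (f · (k + n)) (j + n) = (-1 : ℤ) ^ n • f j k := by
  induction n generalizing j with
  | zero => simp
  | succ n ih =>
    have hstep : (fun y ↦ Δ_[1] (f · (k + n + 1)) (y + 1)) = (-1 : ℤ) • (f · (k + n)) := by
      funext y
      simp only [fwdDiff, hf y (k + n), Pi.smul_apply, neg_smul, one_smul]
      abel
    rw [Function.iterate_succ_apply, ← add_assoc, ← add_assoc, ← fwdDiff_iter_comp_add, hstep,
      fwdDiff_iter_const_smul, Pi.smul_apply, ih, smul_smul, pow_succ']

theorem sum_neg_one_pow_mul_choose_smul_of_recurrence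
    (hf : ∀ j k, f (j + 1) (k + 1) = f j k + f (j + 2) (k + 1)) (i d : ℕ) :
    ∑ m ∈ range (i + 1), ((-1 : ℤ) ^ m * i.choose m) • f (i + m) (d + i) = f 0 d := by
  have h := fwdDiff_iter_eq_of_recurrence hf i 0 d
  rw [zero_add, fwdDiff_iter_eq_sum_shift] at h
  have hsign : ∀ m ≤ i, (-1 : ℤ) ^ i * (-1) ^ (i - m) = (-1) ^ m := fun m hm ↦ by
    obtain ⟨r, rfl⟩ := Nat.exists_eq_add_of_le hm
    rw [Nat.add_sub_cancel_left, pow_add, mul_assoc, ← mul_pow, neg_one_mul, neg_neg, one_pow,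
      mul_one]
  calc ∑ m ∈ range (i + 1), ((-1 : ℤ) ^ m * i.choose m) • f (i + m) (d + i)
      = (-1 : ℤ) ^ i •
          ∑ m ∈ range (i + 1), ((-1 : ℤ) ^ (i - m) * i.choose m) • f (i + m • 1) (d + i) := by
        rw [smul_sum]
        refine sum_congr rfl fun m hm ↦ ?_
        rw [smul_smul, ← mul_assoc, hsign m (Nat.lt_succ_iff.mp (mem_range.mp hm)), smul_eq_mul,
          mul_one]
    _ = f 0 d := by rw [h, smul_smul, ← mul_pow, neg_one_mul, neg_neg, one_pow, one_smul]

end Recurrence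

/-- The entries of `Tmat` on `ℕ × ℕ`, in the division-free form `2 binom(n-1, d) - binom(n, d)`
with `n = 2k - j`, `d = k - j` (see `ballot_eq_div`). -/
def ballot (j k : ℕ) : ℚ :=
  if j ≤ k then 2 * ((2 * k - j - 1).choose (k - j) : ℚ) - ((2 * k - j).choose (k - j) : ℚ) else 0

theorem ballot_of_lt {j k : ℕ} (h : k < j) : ballot j k = 0 :=
  if_neg h.not_ge

theorem ballot_of_add_eq {j d k : ℕ} (h : j + d = k) :
    ballot j k = 2 * ((j + 2 * d - 1).choose d : ℚ) - ((j + 2 * d).choose d : ℚ) := by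
  subst h
  rw [ballot, if_pos (Nat.le_add_right j d), show 2 * (j + d) - j = j + 2 * d by omega,
    Nat.add_sub_cancel_left]

theorem ballot_self (k : ℕ) : ballot k k = 1 := by
  rw [ballot_of_add_eq (add_zero k)]
  norm_num

theorem ballot_zero_left (d : ℕ) : ballot 0 d = if d = 0 then 1 else 0 := by
  rcases d with _ | e
  · exact ballot_self 0
  · rw [ballot_of_add_eq (zero_add _), if_neg e.succ_ne_zero, zero_add,
      show 2 * (e + 1) - 1 = 2 * e + 1 by omega, show 2 * (e + 1) = 2 * e + 1 + 1 by ring,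
      Nat.choose_succ_succ' (2 * e + 1), Nat.choose_symm_half]
    push_cast
    ring

theorem ballot_succ_succ (j k : ℕ) :
    ballot (j + 1) (k + 1) = ballot j k + ballot (j + 2) (k + 1) := by
  rcases lt_trichotomy j k with h | rfl | h
  · obtain ⟨d, rfl⟩ := Nat.exists_eq_add_of_lt h
    rw [ballot_of_add_eq (j := j) (d := d + 1) (by ring),
      ballot_of_add_eq (j := j + 1) (d := d + 1) (by ring),
      ballot_of_add_eq (j := j + 2) (d := d) (by ring)]
    set n := j + 2 * d + 1
    rw [show j + 2 * (d + 1) - 1 = n by omega, show j + 2 * (d + 1) = n + 1 by omega,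
      show j + 1 + 2 * (d + 1) - 1 = n + 1 by omega, show j + 1 + 2 * (d + 1) = n + 2 by omega,
      show j + 2 + 2 * d - 1 = n by omega, show j + 2 + 2 * d = n + 1 by omega,
      Nat.choose_succ_succ' (n + 1), Nat.choose_succ_succ' n]
    push_cast
    ring
  · rw [ballot_self, ballot_self, ballot_of_lt (by omega), add_zero]
  · rw [ballot_of_lt h, ballot_of_lt (by omega), ballot_of_lt (by omega), add_zero]

theorem ballot_eq_div {j k : ℕ} (hj : 0 < j) (hjk : j ≤ k) :
    ballot j k = (j / (2 * k - j : ℕ) : ℚ) * ((2 * k - j).choose (k - j) : ℚ) := by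
  obtain ⟨d, rfl⟩ := Nat.exists_eq_add_of_le hjk
  rw [ballot_of_add_eq rfl, show 2 * (j + d) - j = j + 2 * d by omega, Nat.add_sub_cancel_left]
  have hkey : ((j + 2 * d : ℕ) : ℚ) * ((j + 2 * d - 1).choose d : ℚ)
      = ((j + 2 * d).choose d : ℚ) * (j + d : ℕ) := by
    obtain ⟨m, hm⟩ : ∃ m, j + 2 * d = m + 1 := ⟨j + 2 * d - 1, by omega⟩
    rw [hm, Nat.add_sub_cancel, ← Nat.cast_mul, ← Nat.cast_mul, Nat.add_one_mul_choose_eq,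
      Nat.choose_succ_right_eq, show m + 1 - d = j + d by omega]
  have hn : ((j + 2 * d : ℕ) : ℚ) ≠ 0 := by positivity
  field_simp
  push_cast at hkey ⊢
  linear_combination 2 * hkey

theorem sum_neg_one_pow_mul_choose_mul_ballot (i k : ℕ) :
    ∑ m ∈ range (i + 1), (-1 : ℚ) ^ m * i.choose m * ballot (i + m) k =
      if i = k then 1 else 0 := by
  rcases le_or_gt i k with hik | hki
  · obtain ⟨d, rfl⟩ := Nat.exists_eq_add_of_le' hik
    have h := sum_neg_one_pow_mul_choose_smul_of_recurrence ballot_succ_succ i d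
    simp only [zsmul_eq_mul, Int.cast_mul, Int.cast_pow, Int.cast_neg, Int.cast_one,
      Int.cast_natCast] at h
    rw [h, ballot_zero_left]
    simp
  · rw [if_neg hki.ne', sum_eq_zero fun m _ ↦ by rw [ballot_of_lt (by omega), mul_zero]]

theorem Tmat_apply {N : ℕ} (i j : Fin N) : Tmat N i j = ballot i j := by
  unfold Tmat
  split_ifs with h0 hpos
  · rw [h0.1, h0.2, ballot_self]
  · exact (ballot_eq_div hpos.1 hpos.2).symm
  · rcases Nat.eq_zero_or_pos (i : ℕ) with hi | hi
    · rw [hi, ballot_zero_left, if_neg (by omega)]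
    · rw [ballot_of_lt (by omega)]

theorem sum_Stilde_mul {N : ℕ} (i : Fin N) (g : ℕ → ℚ) (hg : ∀ j ≥ N, g j = 0) :
    ∑ j, Stilde N i j * g j =
      ∑ m ∈ range (i + 1), (-1 : ℚ) ^ m * (i : ℕ).choose m * g (i + m) := by
  set t : ℕ → ℚ := fun j ↦
    (if (i : ℕ) ≤ j ∧ j ≤ 2 * i then (-1 : ℚ) ^ (j - i) * ((i : ℕ).choose (j - i) : ℚ) else 0) * g j
  have ht : ∀ j ≥ min N (2 * i + 1), t j = 0 := fun j hj ↦ by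
    rcases min_le_iff.mp hj with hN | hi
    · simp only [t, hg j hN, mul_zero]
    · simp only [t, if_neg (by omega : ¬((i : ℕ) ≤ j ∧ j ≤ 2 * i)), zero_mul]
  calc ∑ j, Stilde N i j * g j = ∑ j ∈ range N, t j := Fin.sum_univ_eq_sum_range t N
    _ = ∑ j ∈ range (i + (i + 1)), t j := by
      rw [eventually_constant_sum ht (min_le_left _ _),
        eventually_constant_sum ht (n := i + (i + 1)) (by omega)]
    _ = _ := by
      rw [sum_range_add, sum_eq_zero fun j hj ↦ ?_, zero_add]
      · refine sum_congr rfl fun m hm ↦ ?_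
        simp only [t, if_pos (by simp at hm; omega : (i : ℕ) ≤ i + m ∧ i + m ≤ 2 * i),
          Nat.add_sub_cancel_left]
      · simp only [t, if_neg (by simp at hj; omega : ¬((i : ℕ) ≤ j ∧ j ≤ 2 * i)), zero_mul]

theorem Stilde_mul_Tmat (N : ℕ) : Stilde N * Tmat N = 1 := by
  ext i k
  simp only [Matrix.mul_apply, Matrix.one_apply, Tmat_apply, Fin.ext_iff]
  rw [sum_Stilde_mul i (ballot · k) fun j hj ↦ ballot_of_lt (by omega),
    sum_neg_one_pow_mul_choose_mul_ballot]

theorem statement16_general (N : ℕ) :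
    Stilde N * Tmat N = 1 ∧ Tmat N * Stilde N = 1 :=
  ⟨Stilde_mul_Tmat N, mul_eq_one_comm.mp (Stilde_mul_Tmat N)⟩

/-- `S̃ · T = Id` and `T · S̃ = Id`; that is, `T = S̃⁻¹`. -/
theorem statement16 (N : ℕ) (hN : 1 ≤ N) :
    Stilde N * Tmat N = 1 ∧ Tmat N * Stilde N = 1 :=
  statement16_general N
end
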